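/- arXiv:1408.0596 — 5 statements merged into one kernel-verified Lean document; each statement's English description precedes it below -/
import Mathlib

section
/- Let G = (V,E) be a finite simple graph and let M be any matching of G. Then there exists a maximum matching M* of G such that every connected component of the graph (V, M ∪ M*) is either a single edge belonging to M ∩ M*, or an M-augmenting path, i.e. an M-alternating path whose first and last edges lie in M* and whose two endpoints are not covered by M (such a path with m edges of M has m+1 edges of M*). -/
/-!
Choose a maximum matching `Mopt` sharing as many edges with `M` as possible. A component `C`
of `(V, M ∪ Mopt)` meeting an edge of `M ∩ Mopt` is that single edge. Otherwise, replacing the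
`Mopt`-edges inside `C` by the `M`-edges inside `C` gives another matching, so by the choice of
`Mopt` the component `C` has fewer `M`-edges than `Mopt`-edges, hence fewer `M`-covered than
`Mopt`-covered vertices; in particular some vertex `v` of `C` is not covered by `M`. A longest
alternating path from `v` starting with an `Mopt`-edge is closed under the edges of `M ∪ Mopt`,
so it spans `C`. Were its last edge in `M`, the `M`-covered and the `Mopt`-covered vertices of
`C` would be equally many; so it ends with an `Mopt`-edge at a vertex not covered by `M`, and
is an `M`-augmenting path.
-/

namespace MinGreedy

noncomputable section

open SimpleGraph

/-- The degree of a vertex `x` in the graph `H`. -/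
def deg {V : Type} (H : SimpleGraph V) (x : V) : ℕ :=
  (H.neighborSet x).ncard

/-- `M` is a matching of `G`, given as a set of pairwise disjoint edges of `G`. -/
def IsMatchingSet {V : Type} (G : SimpleGraph V) (M : Set (Sym2 V)) : Prop :=
  M ⊆ G.edgeSet ∧ ∀ e ∈ M, ∀ f ∈ M, e ≠ f → ∀ x : V, x ∈ e → x ∉ f

/-- `M` is a maximum matching of `G`. -/
def IsMaxMatchingSet {V : Type} (G : SimpleGraph V) (M : Set (Sym2 V)) : Prop :=
  IsMatchingSet G M ∧ ∀ N : Set (Sym2 V), IsMatchingSet G N → N.ncard ≤ M.ncard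

/-- `ν G`, the maximum size of a matching of `G`. -/
def nu {V : Type} (G : SimpleGraph V) : ℕ :=
  sSup {n | ∃ M : Set (Sym2 V), IsMatchingSet G M ∧ M.ncard = n}

/-- `G` has maximum degree at most `Δ`. -/
def maxDegLE {V : Type} (G : SimpleGraph V) (Δ : ℕ) : Prop :=
  ∀ x : V, deg G x ≤ Δ

/-- An execution of a greedy matching algorithm on `G`: in step `i` (`0 ≤ i < k`) the
edge `{sel i, oth i}` of `Gs i` is picked with selected vertex `sel i`, and `Gs (i+1)`
is obtained from `Gs i` by deleting all edges incident with `sel i` or `oth i`;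
at the end `Gs k` has no edges. -/
structure GreedyExec (V : Type) (G : SimpleGraph V) where
  k : ℕ
  Gs : ℕ → SimpleGraph V
  sel : ℕ → V
  oth : ℕ → V
  init : Gs 0 = G
  adj : ∀ i < k, (Gs i).Adj (sel i) (oth i)
  step : ∀ i < k, Gs (i + 1) =
    SimpleGraph.fromEdgeSet {e | e ∈ (Gs i).edgeSet ∧ sel i ∉ e ∧ oth i ∉ e}
  final : (Gs k).edgeSet = ∅

/-- The output matching `M = {e_1, …, e_k}` of an execution. -/
def GreedyExec.M {V : Type} {G : SimpleGraph V} (E : GreedyExec V G) : Set (Sym2 V) :=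
  {e | ∃ i < E.k, e = s(E.sel i, E.oth i)}

/-- The execution is a MinGreedy execution: in each step the selected vertex has
minimum positive degree in the current graph. -/
def GreedyExec.IsMinGreedy {V : Type} {G : SimpleGraph V} (E : GreedyExec V G) : Prop :=
  ∀ i < E.k, ∀ x : V, 0 < deg (E.Gs i) x → deg (E.Gs i) (E.sel i) ≤ deg (E.Gs i) x

/-- The execution is a 1-2-MinGreedy execution: whenever the current graph has a vertex of
degree 1 or 2, the selected vertex has minimum positive degree in the current graph. -/
def GreedyExec.Is12MinGreedy {V : Type} {G : SimpleGraph V} (E : GreedyExec V G) : Prop :=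
  ∀ i < E.k, (∃ x : V, deg (E.Gs i) x = 1 ∨ deg (E.Gs i) x = 2) →
    ∀ x : V, 0 < deg (E.Gs i) x → deg (E.Gs i) (E.sel i) ≤ deg (E.Gs i) x

/-- `p 0, p 1, …, p (2m+1)` is an `M`-augmenting path: an `M`-alternating path whose
first and last edges lie in `Mopt` and whose two endpoints `p 0` and `p (2m+1)` are
not covered by `M`; it has `m` edges of `M` and `m+1` edges of `Mopt`. -/
def IsAugPath {V : Type} (M Mopt : Set (Sym2 V)) (m : ℕ) (p : ℕ → V) : Prop :=
  (∀ i ≤ 2 * m + 1, ∀ j ≤ 2 * m + 1, p i = p j → i = j) ∧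
  (∀ j ≤ 2 * m, (j % 2 = 0 → s(p j, p (j + 1)) ∈ Mopt) ∧
                (j % 2 = 1 → s(p j, p (j + 1)) ∈ M)) ∧
  (∀ e ∈ M, p 0 ∉ e ∧ p (2 * m + 1) ∉ e)

/-- The vertex set of the path `p 0, …, p (2m+1)`. -/
def pathSupp {V : Type} (m : ℕ) (p : ℕ → V) : Set V := p '' {j | j ≤ 2 * m + 1}

/-- `w` is an endpoint of an `M`-augmenting path of the graph `(V, M ∪ Mopt)`. -/
def IsPathEndpoint {V : Type} (M Mopt : Set (Sym2 V)) (w : V) : Prop :=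
  ∃ m p, IsAugPath M Mopt m p ∧ (w = p 0 ∨ w = p (2 * m + 1))

/-- `S` is the vertex set of a singleton component: a single edge of `M ∩ Mopt`. -/
def IsSingletonComp {V : Type} (M Mopt : Set (Sym2 V)) (S : Set V) : Prop :=
  ∃ x y : V, x ≠ y ∧ s(x, y) ∈ M ∧ s(x, y) ∈ Mopt ∧ S = ({x, y} : Set V)

/-- `Mopt` is a maximum matching of `G` in normal form with respect to `M`: every
(nontrivial) connected component of the graph `(V, M ∪ Mopt)` is a singleton
(a single edge of `M ∩ Mopt`) or an `M`-augmenting path. -/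
def NormalForm {V : Type} (G : SimpleGraph V) (M Mopt : Set (Sym2 V)) : Prop :=
  IsMaxMatchingSet G Mopt ∧
  ∀ C : (SimpleGraph.fromEdgeSet (M ∪ Mopt)).ConnectedComponent,
    2 ≤ C.supp.ncard →
    IsSingletonComp M Mopt C.supp ∨
    ∃ m p, IsAugPath M Mopt m p ∧ C.supp = pathSupp m p

/-- `{x, y}` is an edge of `F = E ∖ (M ∪ Mopt)`. -/
def FEdge {V : Type} (G : SimpleGraph V) (M Mopt : Set (Sym2 V)) (x y : V) : Prop :=
  s(x, y) ∈ G.edgeSet ∧ s(x, y) ∉ M ∧ s(x, y) ∉ Mopt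

/-- The number of `F`-edges incident with `x`. -/
def Fdeg {V : Type} (G : SimpleGraph V) (M Mopt : Set (Sym2 V)) (x : V) : ℕ :=
  {e : Sym2 V | e ∈ G.edgeSet ∧ e ∉ M ∧ e ∉ Mopt ∧ x ∈ e}.ncard

/-- `x` is matched at step `i` of the execution, i.e. `x ∈ e_i`. -/
def matchedAt {V : Type} {G : SimpleGraph V} (E : GreedyExec V G) (i : ℕ) (x : V) : Prop :=
  i < E.k ∧ (x = E.sel i ∨ x = E.oth i)

/-- The `F`-edge `{v, w}` is a transfer from `v` to `w` arising at step `i`: `w` is an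
endpoint of an `M`-augmenting path, `v` is matched at step `i` and the degree of `w`
in the graph after step `i` is at most 1. -/
def transferAt {V : Type} {G : SimpleGraph V} (E : GreedyExec V G)
    (M Mopt : Set (Sym2 V)) (i : ℕ) (v w : V) : Prop :=
  FEdge G M Mopt v w ∧ IsPathEndpoint M Mopt w ∧ matchedAt E i v ∧
  deg (E.Gs (i + 1)) w ≤ 1

/-- The edge `{v, w}` is a transfer from `v` to `w`. -/
def IsTransfer {V : Type} {G : SimpleGraph V} (E : GreedyExec V G)
    (M Mopt : Set (Sym2 V)) (v w : V) : Prop :=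
  ∃ i, transferAt E M Mopt i v w

/-- `(v, w)` is an uncanceled transfer arising at step `i`: it is a transfer arising at
step `i` and it is not the case that (`w` has degree exactly 1 before step `i` with its
unique incident edge being `{v, w}`, and `w` is the target of at least two uncanceled
transfers arising at steps before `i`). -/
def uncanceledAt {V : Type} {G : SimpleGraph V} (E : GreedyExec V G)
    (M Mopt : Set (Sym2 V)) (i : ℕ) : V → V → Prop :=
  Nat.strongRecOn (motive := fun _ => V → V → Prop) i (fun i ih v w =>
    transferAt E M Mopt i v w ∧
    ¬(deg (E.Gs i) w = 1 ∧ (E.Gs i).Adj v w ∧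
      ∃ (j₁ : ℕ) (h₁ : j₁ < i) (v₁ : V) (j₂ : ℕ) (h₂ : j₂ < i) (v₂ : V),
        ih j₁ h₁ v₁ w ∧ ih j₂ h₂ v₂ w ∧ (j₁, v₁) ≠ (j₂, v₂)))

/-- `(v, w)` is an uncanceled transfer. -/
def IsUncanceledTransfer {V : Type} {G : SimpleGraph V} (E : GreedyExec V G)
    (M Mopt : Set (Sym2 V)) (v w : V) : Prop :=
  ∃ i, uncanceledAt E M Mopt i v w

/-- `(v, w)` is a canceled transfer. -/
def IsCanceledTransfer {V : Type} {G : SimpleGraph V} (E : GreedyExec V G)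
    (M Mopt : Set (Sym2 V)) (v w : V) : Prop :=
  IsTransfer E M Mopt v w ∧ ¬IsUncanceledTransfer E M Mopt v w

/-- `d_X`: the number of transfers whose source lies in the vertex set `X`. -/
def debits {V : Type} {G : SimpleGraph V} (E : GreedyExec V G)
    (M Mopt : Set (Sym2 V)) (X : Set V) : ℕ :=
  {q : V × V | IsTransfer E M Mopt q.1 q.2 ∧ q.1 ∈ X}.ncard

/-- `c_X`: the number of transfers whose target lies in the vertex set `X`. -/
def credits {V : Type} {G : SimpleGraph V} (E : GreedyExec V G)
    (M Mopt : Set (Sym2 V)) (X : Set V) : ℕ :=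
  {q : V × V | IsTransfer E M Mopt q.1 q.2 ∧ q.2 ∈ X}.ncard

/-- `i` is the creation step of the component with vertex set `X`: the step in which the
first edge of `M` lying in `X` is picked. -/
def creationStep {V : Type} {G : SimpleGraph V} (E : GreedyExec V G)
    (X : Set V) (i : ℕ) : Prop :=
  i < E.k ∧ E.sel i ∈ X ∧ E.oth i ∈ X ∧ ∀ j < i, ¬(E.sel j ∈ X ∧ E.oth j ∈ X)

/-- A degree-1 endpoint exists after the creation step `i`: some transfer with source
`sel i` or `oth i` targets an endpoint `w` of degree exactly 1 after step `i`. -/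
def Deg1EndpointAfter {V : Type} {G : SimpleGraph V} (E : GreedyExec V G)
    (M Mopt : Set (Sym2 V)) (i : ℕ) : Prop :=
  ∃ v w : V, (v = E.sel i ∨ v = E.oth i) ∧ transferAt E M Mopt i v w ∧
    deg (E.Gs (i + 1)) w = 1

section NormalForm

variable {V : Type}

def edgesIn (X : Set (Sym2 V)) (S : Set V) : Set (Sym2 V) := {e ∈ X | ∀ x ∈ e, x ∈ S}

def edgeVerts (F : Set (Sym2 V)) : Set V := {x | ∃ e ∈ F, x ∈ e}

def altMatching (M Mopt : Set (Sym2 V)) (j : ℕ) : Set (Sym2 V) :=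
  if j % 2 = 0 then Mopt else M

def IsAltSeq (M Mopt : Set (Sym2 V)) (s : ℕ) (q : ℕ → V) : Prop :=
  (∀ i ≤ s, ∀ j ≤ s, q i = q j → i = j) ∧ ∀ j < s, s(q j, q (j + 1)) ∈ altMatching M Mopt j

namespace IsMatchingSet

variable {G : SimpleGraph V} {X : Set (Sym2 V)}

lemma ne_of_mem (hX : IsMatchingSet G X) {x y : V} (h : s(x, y) ∈ X) : x ≠ y :=
  G.ne_of_adj (G.mem_edgeSet.mp (hX.1 h))

lemma eq_of_mem_of_mem (hX : IsMatchingSet G X) {e f : Sym2 V} (he : e ∈ X) (hf : f ∈ X)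
    {x : V} (hxe : x ∈ e) (hxf : x ∈ f) : e = f := by
  by_contra hef
  exact hX.2 e he f hf hef x hxe hxf

lemma ncard_edgeVerts [Finite V] (hX : IsMatchingSet G X) {F : Set (Sym2 V)} (hF : F ⊆ X) :
    (edgeVerts F).ncard = 2 * F.ncard := by
  refine Set.Finite.induction_on_subset (motive := fun F _ => (edgeVerts F).ncard = 2 * F.ncard)
    F (Set.toFinite F) (by simp [edgeVerts]) ?_
  intro e t heF htF het ih
  induction e using Sym2.ind with
  | h x y =>
    have hsplit : edgeVerts (insert s(x, y) t) = {x, y} ∪ edgeVerts t := by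
      ext z
      simp [edgeVerts, or_and_right, exists_or]
    have hdisj : Disjoint ({x, y} : Set V) (edgeVerts t) := by
      refine Set.disjoint_left.mpr fun z hz ⟨f, hf, hzf⟩ => ?_
      have hz' : z ∈ s(x, y) := by rcases hz with rfl | rfl <;> simp
      exact het (hX.eq_of_mem_of_mem (hF (htF hf)) (hF heF) hzf hz' ▸ hf)
    rw [hsplit, Set.ncard_union_eq hdisj, Set.ncard_pair (hX.ne_of_mem (hF heF)), ih,
      Set.ncard_insert_of_notMem het]
    ring

end IsMatchingSet

lemma exists_isMaxMatchingSet [Finite V] (G : SimpleGraph V) : ∃ N, IsMaxMatchingSet G N := by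
  have hempty : IsMatchingSet G ∅ := ⟨Set.empty_subset _, by simp⟩
  obtain ⟨N, hN, hmax⟩ := Set.exists_max_image {N : Set (Sym2 V) | IsMatchingSet G N}
    Set.ncard (Set.toFinite _) ⟨∅, hempty⟩
  exact ⟨N, hN, hmax⟩

lemma exists_isMaxMatchingSet_forall_ncard_inter_le [Finite V] (G : SimpleGraph V)
    (M : Set (Sym2 V)) : ∃ Mopt, IsMaxMatchingSet G Mopt ∧
      ∀ N, IsMaxMatchingSet G N → (M ∩ N).ncard ≤ (M ∩ Mopt).ncard :=
  Set.exists_max_image {N | IsMaxMatchingSet G N} (fun N => (M ∩ N).ncard) (Set.toFinite _)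
    (exists_isMaxMatchingSet G)

section Component

variable {E : Set (Sym2 V)} {C : (fromEdgeSet E).ConnectedComponent}

lemma mem_supp_of_mem_edge {e : Sym2 V} (he : e ∈ E) {x y : V} (hx : x ∈ e) (hy : y ∈ e)
    (hxC : x ∈ C.supp) : y ∈ C.supp := by
  by_cases hxy : x = y
  · exact hxy ▸ hxC
  · refine C.mem_supp_of_adj_mem_supp hxC ((fromEdgeSet_adj _).mpr ⟨?_, hxy⟩)
    rwa [← (Sym2.mem_and_mem_iff hxy).mp ⟨hx, hy⟩]

lemma supp_subset_of_forall_mem_edge {T : Set V}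
    (hT : ∀ e ∈ E, ∀ x ∈ e, x ∈ T → ∀ y ∈ e, y ∈ T) {x : V} (hxC : x ∈ C.supp) (hxT : x ∈ T) :
    C.supp ⊆ T := by
  suffices h : ∀ {a b : V}, (fromEdgeSet E).Walk a b → a ∈ T → b ∈ T from
    fun y hyC => h (C.reachable_of_mem_supp hxC hyC).some hxT
  intro a b w
  induction w with
  | nil => exact id
  | cons hadj _ ih =>
    exact fun ha => ih (hT _ ((fromEdgeSet_adj _).mp hadj).1 _ (Sym2.mem_mk_left _ _) ha _
      (Sym2.mem_mk_right _ _))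

lemma nonempty_edgesIn_supp [Finite V] (hC : 2 ≤ C.supp.ncard) :
    (edgesIn E C.supp).Nonempty := by
  obtain ⟨a, b, ha, hb, hab⟩ := (Set.one_lt_ncard_iff).mp hC
  obtain ⟨w⟩ := C.reachable_of_mem_supp ha hb
  cases w with
  | nil => exact absurd rfl hab
  | cons hadj _ =>
    refine ⟨_, ((fromEdgeSet_adj _).mp hadj).1, fun x hx => ?_⟩
    rcases Sym2.mem_iff.mp hx with rfl | rfl
    · exact ha
    · exact C.mem_supp_of_adj_mem_supp ha hadj

end Component

section Swap

variable [Finite V] {G : SimpleGraph V} {M Mopt : Set (Sym2 V)}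

/-- Swapping the edges of `Mopt` inside `C` for those of `M` gives another matching. -/
lemma ncard_edgesIn_lt (hM : IsMatchingSet G M) (hmax : IsMaxMatchingSet G Mopt)
    (hinter : ∀ N, IsMaxMatchingSet G N → (M ∩ N).ncard ≤ (M ∩ Mopt).ncard)
    {C : (fromEdgeSet (M ∪ Mopt)).ConnectedComponent}
    (hNC : ∀ e ∈ M, e ∈ Mopt → ∀ x ∈ e, x ∉ C.supp) (hC : (edgesIn (M ∪ Mopt) C.supp).Nonempty) :
    (edgesIn M C.supp).ncard < (edgesIn Mopt C.supp).ncard := by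
  set MC := edgesIn M C.supp
  set OC := edgesIn Mopt C.supp
  set N := (Mopt \ OC) ∪ MC
  have hcross : ∀ e ∈ Mopt \ OC, ∀ f ∈ MC, ∀ x ∈ e, x ∉ f := by
    rintro e ⟨he, heC⟩ f ⟨-, hfC⟩ x hxe hxf
    exact heC ⟨he, fun y hy => mem_supp_of_mem_edge (Or.inr he) hxe hy (hfC x hxf)⟩
  have hN : IsMatchingSet G N := by
    refine ⟨Set.union_subset (Set.sdiff_subset.trans hmax.1.1) fun e he => hM.1 he.1, ?_⟩
    rintro e (he | he) f (hf | hf) hef x hxe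
    · exact hmax.1.2 e he.1 f hf.1 hef x hxe
    · exact hcross e he f hf x hxe
    · exact fun hxf => hcross f hf e he x hxf hxe
    · exact hM.2 e he.1 f hf.1 hef x hxe
  have hOC : OC ⊆ Mopt := fun e he => he.1
  have hcard : N.ncard + OC.ncard = Mopt.ncard + MC.ncard := by
    have hdisj : Disjoint (Mopt \ OC) MC :=
      Set.disjoint_left.mpr fun e he he' => he.2 ⟨he.1, he'.2⟩
    rw [Set.ncard_union_eq hdisj, Set.ncard_sdiff hOC]
    have := Set.ncard_le_ncard hOC
    omega
  have houtside : ∀ e ∈ M ∩ Mopt, ¬∀ x ∈ e, x ∈ C.supp := fun e he heC =>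
    hNC e he.1 he.2 _ e.out_fst_mem (heC _ e.out_fst_mem)
  have hinterN : (M ∩ Mopt).ncard + MC.ncard ≤ (M ∩ N).ncard := by
    rw [← Set.ncard_union_eq (Set.disjoint_left.mpr fun e he heC => houtside e he heC.2)]
    refine Set.ncard_le_ncard ?_
    rintro e (he | he)
    · exact ⟨he.1, Or.inl ⟨he.2, fun heC => houtside e he heC.2⟩⟩
    · exact ⟨he.1, Or.inr he⟩
  have hle := hmax.2 N hN
  refine lt_of_le_of_ne (by omega) fun heq => ?_
  have := hinter N ⟨hN, fun N' hN' => (hmax.2 N' hN').trans (by omega)⟩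
  obtain ⟨e, he | he, heC⟩ := hC
  · have : 0 < MC.ncard := (Set.ncard_pos (Set.toFinite _)).mpr ⟨e, he, heC⟩
    omega
  · have : 0 < OC.ncard := (Set.ncard_pos (Set.toFinite _)).mpr ⟨e, he, heC⟩
    omega

lemma exists_mem_supp_forall_notMem_of_ncard_lt
    {C : (fromEdgeSet (M ∪ Mopt)).ConnectedComponent}
    (hlt : (edgeVerts (edgesIn M C.supp)).ncard < (edgeVerts (edgesIn Mopt C.supp)).ncard) :
    ∃ v ∈ C.supp, ∀ e ∈ M, v ∉ e := by
  by_contra! h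
  refine hlt.not_ge (Set.ncard_le_ncard fun x ⟨e, ⟨he, heC⟩, hxe⟩ => ?_)
  obtain ⟨f, hf, hxf⟩ := h x (heC x hxe)
  exact ⟨f, ⟨hf, fun y hy => mem_supp_of_mem_edge (Or.inl hf) hxf hy (heC x hxe)⟩, hxf⟩

end Swap

section Alternating

variable {G : SimpleGraph V} {M Mopt : Set (Sym2 V)}

lemma altMatching_add_two (j : ℕ) : altMatching M Mopt (j + 2) = altMatching M Mopt j := by
  simp [altMatching]

lemma altMatching_subset (j : ℕ) : altMatching M Mopt j ⊆ M ∪ Mopt := by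
  unfold altMatching
  split_ifs
  exacts [Set.subset_union_right, Set.subset_union_left]

lemma mem_altMatching_succ {e : Sym2 V} (he : e ∈ M ∪ Mopt) {j : ℕ}
    (hj : e ∉ altMatching M Mopt j) : e ∈ altMatching M Mopt (j + 1) := by
  unfold altMatching at *
  rcases he with he | he <;> split_ifs at * <;> first | omega | assumption | contradiction

lemma mem_inter_of_mem_altMatching {e : Sym2 V} {j : ℕ} (h : e ∈ altMatching M Mopt j)
    (h' : e ∈ altMatching M Mopt (j + 1)) : e ∈ M ∧ e ∈ Mopt := by
  unfold altMatching at *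
  split_ifs at * <;> first | omega | exact ⟨h', h⟩ | exact ⟨h, h'⟩

lemma IsMatchingSet.altMatching (hM : IsMatchingSet G M) (hMopt : IsMatchingSet G Mopt)
    (j : ℕ) : IsMatchingSet G (altMatching M Mopt j) := by
  unfold MinGreedy.altMatching
  split_ifs
  exacts [hMopt, hM]

namespace IsAltSeq

variable {s : ℕ} {q : ℕ → V}

lemma lt_card [Finite V] (hq : IsAltSeq M Mopt s q) : s < Nat.card V := by
  have := Nat.card_le_card_of_injective (fun i : Fin (s + 1) => q i)
    fun a b h => Fin.ext (hq.1 a (by omega) b (by omega) h)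
  simpa using this

lemma mem_supp {C : (fromEdgeSet (M ∪ Mopt)).ConnectedComponent} (hq : IsAltSeq M Mopt s q)
    (h0 : q 0 ∈ C.supp) : ∀ j ≤ s, q j ∈ C.supp
  | 0, _ => h0
  | j + 1, hj => mem_supp_of_mem_edge (altMatching_subset j (hq.2 j hj)) (Sym2.mem_mk_left _ _)
      (Sym2.mem_mk_right _ _) (hq.mem_supp h0 j (by omega))

lemma exists_eq_edge (hM : IsMatchingSet G M) (hMopt : IsMatchingSet G Mopt)
    (hq : IsAltSeq M Mopt s q) (hq0 : ∀ e ∈ M, q 0 ∉ e) {i : ℕ} (hi : i ≤ s) {e : Sym2 V}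
    (he : e ∈ M ∪ Mopt) (hqe : q i ∈ e) (hlast : i = s → e ∉ altMatching M Mopt s) :
    ∃ l < s, e = s(q l, q (l + 1)) := by
  by_cases hei : e ∈ altMatching M Mopt i
  · have his : i < s := lt_of_le_of_ne hi fun h => hlast h (h ▸ hei)
    exact ⟨i, his, (hM.altMatching hMopt i).eq_of_mem_of_mem hei (hq.2 i his) hqe
      (Sym2.mem_mk_left _ _)⟩
  · have hei' := mem_altMatching_succ he hei
    obtain _ | l := i
    · exact absurd hqe (hq0 e hei')
    · rw [altMatching_add_two] at hei'
      exact ⟨l, by omega, (hM.altMatching hMopt l).eq_of_mem_of_mem hei' (hq.2 l (by omega)) hqe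
        (Sym2.mem_mk_right _ _)⟩

lemma ne_of_mem_altMatching (hM : IsMatchingSet G M) (hMopt : IsMatchingSet G Mopt)
    (hq : IsAltSeq M Mopt s q) (hq0 : ∀ e ∈ M, q 0 ∉ e) (hNC : ∀ e ∈ M, e ∈ Mopt → q s ∉ e)
    {z : V} (hz : s(q s, z) ∈ altMatching M Mopt s) {i : ℕ} (hi : i ≤ s) : q i ≠ z := by
  rintro rfl
  rcases hi.lt_or_eq with hi | rfl
  · obtain ⟨l, hl, hedge⟩ := hq.exists_eq_edge hM hMopt hq0 hi.le (altMatching_subset s hz)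
      (Sym2.mem_mk_right _ _) (by omega)
    -- the new edge would be the last edge of `q`, hence in both `M` and `Mopt`
    have hls : l + 1 = s := by
      rcases Sym2.mem_iff.mp (hedge ▸ Sym2.mem_mk_left (q s) (q i)) with h | h
      · exact absurd (hq.1 s le_rfl l hl.le h) hl.ne'
      · exact hq.1 (l + 1) hl s le_rfl h.symm
    subst hls
    have := mem_inter_of_mem_altMatching (hedge ▸ hq.2 l hl) (hedge ▸ hz)
    exact hNC _ this.1 this.2 (Sym2.mem_mk_left _ _)
  · exact (hM.altMatching hMopt i).ne_of_mem hz rfl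

lemma update (hM : IsMatchingSet G M) (hMopt : IsMatchingSet G Mopt) (hq : IsAltSeq M Mopt s q)
    (hq0 : ∀ e ∈ M, q 0 ∉ e) (hNC : ∀ e ∈ M, e ∈ Mopt → q s ∉ e) {z : V}
    (hz : s(q s, z) ∈ altMatching M Mopt s) :
    IsAltSeq M Mopt (s + 1) (Function.update q (s + 1) z) := by
  have hfresh : ∀ i ≤ s, q i ≠ z := fun i => hq.ne_of_mem_altMatching hM hMopt hq0 hNC hz
  have hold : ∀ j ≤ s, Function.update q (s + 1) z j = q j :=
    fun j hj => Function.update_of_ne (by omega) _ _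
  refine ⟨fun i hi j hj hij => ?_, fun j hj => ?_⟩
  · rcases (show i ≤ s ∨ i = s + 1 by omega) with hi' | rfl <;>
      rcases (show j ≤ s ∨ j = s + 1 by omega) with hj' | rfl
    · exact hq.1 i hi' j hj' (by rwa [hold i hi', hold j hj'] at hij)
    · exact absurd (by simpa [hold i hi'] using hij) (hfresh i hi')
    · exact absurd (by simpa [hold j hj'] using hij.symm) (hfresh j hj')
    · rfl
  · rw [hold j (by omega)]
    rcases (show j < s ∨ j = s by omega) with hj' | rfl
    · rw [hold (j + 1) hj']
      exact hq.2 j hj'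
    · simpa using hz

end IsAltSeq

lemma exists_isAltSeq_maximal [Finite V] (hM : IsMatchingSet G M)
    (hMopt : IsMatchingSet G Mopt) {C : (fromEdgeSet (M ∪ Mopt)).ConnectedComponent}
    (hNC : ∀ e ∈ M, e ∈ Mopt → ∀ x ∈ e, x ∉ C.supp) {v : V} (hvC : v ∈ C.supp)
    (hvM : ∀ e ∈ M, v ∉ e) :
    ∃ s q, q 0 = v ∧ IsAltSeq M Mopt s q ∧ ∀ e ∈ altMatching M Mopt s, q s ∉ e := by
  classical
  let P : ℕ → Prop := fun s => ∃ q : ℕ → V, q 0 = v ∧ IsAltSeq M Mopt s q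
  have hP0 : P 0 := ⟨fun _ => v, rfl, fun i hi j hj _ => by omega, fun j hj => by omega⟩
  obtain ⟨q, hq0, hq⟩ := Nat.findGreatest_spec (Nat.zero_le (Nat.card V)) hP0
  set s := Nat.findGreatest P (Nat.card V)
  refine ⟨s, q, hq0, hq, fun e he hqe => ?_⟩
  obtain ⟨z, rfl⟩ := Sym2.mem_iff_exists.mp hqe
  have hqs : ∀ e ∈ M, e ∈ Mopt → q s ∉ e := fun e heM heO hqe =>
    hNC e heM heO _ hqe (hq.mem_supp (hq0 ▸ hvC) s le_rfl)
  have hq' := hq.update hM hMopt (hq0 ▸ hvM) hqs he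
  refine Nat.findGreatest_is_greatest (Nat.lt_succ_self s) hq'.lt_card.le ⟨_, ?_, hq'⟩
  rw [Function.update_of_ne (by omega)]
  exact hq0

namespace IsAltSeq

variable {s : ℕ} {q : ℕ → V}

lemma supp_eq_image {C : (fromEdgeSet (M ∪ Mopt)).ConnectedComponent}
    (hM : IsMatchingSet G M) (hMopt : IsMatchingSet G Mopt) (hq : IsAltSeq M Mopt s q)
    (hq0 : ∀ e ∈ M, q 0 ∉ e) (hqs : ∀ e ∈ altMatching M Mopt s, q s ∉ e) (h0 : q 0 ∈ C.supp) :
    C.supp = q '' {j | j ≤ s} := by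
  refine (supp_subset_of_forall_mem_edge (T := q '' {j | j ≤ s}) ?_ h0
    ⟨0, Nat.zero_le s, rfl⟩).antisymm ?_
  · rintro e he _ hqe ⟨i, hi, rfl⟩ y hy
    obtain ⟨l, hl, rfl⟩ :=
      hq.exists_eq_edge hM hMopt hq0 hi he hqe fun h he' => hqs e he' (h ▸ hqe)
    rcases Sym2.mem_iff.mp hy with rfl | rfl
    exacts [⟨l, hl.le, rfl⟩, ⟨l + 1, hl, rfl⟩]
  · rintro _ ⟨j, hj, rfl⟩
    exact hq.mem_supp h0 j hj

lemma ncard_edgeVerts_le [Finite V] {C : (fromEdgeSet (M ∪ Mopt)).ConnectedComponent}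
    (hq : IsAltSeq M Mopt s q) (hs : Even s) (hqs : ∀ e ∈ Mopt, q s ∉ e)
    (hsupp : C.supp = q '' {j | j ≤ s}) :
    (edgeVerts (edgesIn Mopt C.supp)).ncard ≤ (edgeVerts (edgesIn M C.supp)).ncard := by
  have hinj : Set.InjOn q (Set.Iio s) := fun a ha b hb h =>
    hq.1 a (Set.mem_Iio.mp ha).le b (Set.mem_Iio.mp hb).le h
  have hinj' : Set.InjOn (fun j => q (j + 1)) (Set.Iio s) := fun a ha b hb h => by
    have := hq.1 (a + 1) (Set.mem_Iio.mp ha) (b + 1) (Set.mem_Iio.mp hb) h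
    omega
  calc (edgeVerts (edgesIn Mopt C.supp)).ncard ≤ (q '' Set.Iio s).ncard := by
        refine Set.ncard_le_ncard ?_
        rintro x ⟨e, ⟨he, heC⟩, hxe⟩
        obtain ⟨j, hj, rfl⟩ := hsupp ▸ heC _ hxe
        refine ⟨j, Set.mem_Iio.mpr (lt_of_le_of_ne hj ?_), rfl⟩
        rintro rfl
        exact hqs e he hxe
    _ = ((fun j => q (j + 1)) '' Set.Iio s).ncard := by
        rw [hinj.ncard_image, hinj'.ncard_image]
    _ ≤ (edgeVerts (edgesIn M C.supp)).ncard := by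
        refine Set.ncard_le_ncard ?_
        rintro _ ⟨j, hj, rfl⟩
        obtain ⟨m, rfl⟩ := hs
        rw [Set.mem_Iio] at hj
        -- `q (j + 1)` lies on the edge of odd index `l`, which is in `M`
        set l := 2 * (j / 2) + 1 with hl_def
        have hl : l < m + m := by omega
        have hlM : s(q l, q (l + 1)) ∈ M := by
          simpa [altMatching, show l % 2 = 1 by omega] using hq.2 l hl
        refine ⟨_, ⟨hlM, fun y hy => ?_⟩, ?_⟩
        · rw [hsupp]
          rcases Sym2.mem_iff.mp hy with rfl | rfl
          exacts [⟨l, show l ≤ m + m by omega, rfl⟩, ⟨l + 1, show l + 1 ≤ m + m by omega, rfl⟩]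
        · rcases (show j + 1 = l ∨ j + 1 = l + 1 by omega) with h | h <;> simp [h]

end IsAltSeq

lemma supp_eq_pair (hM : IsMatchingSet G M) (hMopt : IsMatchingSet G Mopt)
    {C : (fromEdgeSet (M ∪ Mopt)).ConnectedComponent} {x y : V} (hxC : x ∈ C.supp)
    (hxyM : s(x, y) ∈ M) (hxyO : s(x, y) ∈ Mopt) : C.supp = {x, y} := by
  have hedge : ∀ e ∈ M ∪ Mopt, ∀ a ∈ e, a ∈ ({x, y} : Set V) → e = s(x, y) := by
    rintro e he a hae ha
    have hax : a ∈ s(x, y) := by rcases ha with rfl | rfl <;> simp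
    rcases he with he | he
    exacts [hM.eq_of_mem_of_mem he hxyM hae hax, hMopt.eq_of_mem_of_mem he hxyO hae hax]
  refine (supp_subset_of_forall_mem_edge (fun e he a hae ha b hb => ?_) hxC
    (Set.mem_insert x _)).antisymm ?_
  · rw [hedge e he a hae ha] at hb
    rcases Sym2.mem_iff.mp hb with rfl | rfl <;> simp
  · rintro _ (rfl | rfl)
    exacts [hxC, mem_supp_of_mem_edge (Or.inl hxyM) (Sym2.mem_mk_left _ _)
      (Sym2.mem_mk_right _ _) hxC]

lemma exists_isAugPath_of_forall_notMem_supp [Finite V] (hM : IsMatchingSet G M)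
    (hmax : IsMaxMatchingSet G Mopt)
    (hinter : ∀ N, IsMaxMatchingSet G N → (M ∩ N).ncard ≤ (M ∩ Mopt).ncard)
    {C : (fromEdgeSet (M ∪ Mopt)).ConnectedComponent} (hC : 2 ≤ C.supp.ncard)
    (hNC : ∀ e ∈ M, e ∈ Mopt → ∀ x ∈ e, x ∉ C.supp) :
    ∃ m p, IsAugPath M Mopt m p ∧ C.supp = pathSupp m p := by
  have hlt : (edgeVerts (edgesIn M C.supp)).ncard < (edgeVerts (edgesIn Mopt C.supp)).ncard := by
    rw [hM.ncard_edgeVerts fun e he => he.1, hmax.1.ncard_edgeVerts fun e he => he.1]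
    have := ncard_edgesIn_lt hM hmax hinter hNC (nonempty_edgesIn_supp hC)
    omega
  obtain ⟨v, hvC, hvM⟩ := exists_mem_supp_forall_notMem_of_ncard_lt hlt
  obtain ⟨s, q, rfl, hq, hqs⟩ := exists_isAltSeq_maximal hM hmax.1 hNC hvC hvM
  have hsupp := hq.supp_eq_image hM hmax.1 hvM hqs hvC
  obtain ⟨m, rfl | rfl⟩ := Nat.even_or_odd' s
  · refine absurd hlt (not_lt.mpr (hq.ncard_edgeVerts_le (even_two_mul m)
      (fun e he => hqs e ?_) hsupp))
    simpa [altMatching] using he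
  · refine ⟨m, q, ⟨hq.1, fun j hj => ?_, fun e he => ⟨hvM e he, hqs e ?_⟩⟩, hsupp⟩
    · have hj := hq.2 j (by omega)
      exact ⟨fun h => by simpa [altMatching, h] using hj,
        fun h => by simpa [altMatching, h] using hj⟩
    · simpa [altMatching] using he

end Alternating

end NormalForm

/-- for every matching M of G there is a maximum matching M* such that
every (nontrivial) connected component of (V, M ∪ M*) is a single edge of M ∩ M* or an
M-augmenting path. -/
theorem normal_form_exists {V : Type} [Fintype V] (G : SimpleGraph V)
    (M : Set (Sym2 V)) (hM : IsMatchingSet G M) :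
    ∃ Mopt : Set (Sym2 V), IsMaxMatchingSet G Mopt ∧
      ∀ C : (SimpleGraph.fromEdgeSet (M ∪ Mopt)).ConnectedComponent,
        2 ≤ C.supp.ncard →
        IsSingletonComp M Mopt C.supp ∨
        ∃ m p, IsAugPath M Mopt m p ∧ C.supp = pathSupp m p := by
  obtain ⟨Mopt, hmax, hinter⟩ := exists_isMaxMatchingSet_forall_ncard_inter_le G M
  refine ⟨Mopt, hmax, fun C hC => ?_⟩
  by_cases hNC : ∀ e ∈ M, e ∈ Mopt → ∀ x ∈ e, x ∉ C.supp
  · exact Or.inr (exists_isAugPath_of_forall_notMem_supp hM hmax hinter hC hNC)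
  · push Not at hNC
    obtain ⟨e, heM, heO, x, hxe, hxC⟩ := hNC
    obtain ⟨y, rfl⟩ := Sym2.mem_iff_exists.mp hxe
    exact Or.inl ⟨x, y, hM.ne_of_mem heM, heM, heO, supp_eq_pair hM hmax.1 hxC heM heO⟩

end

end MinGreedy
end

section
/- Let G be a finite simple graph, let M be the output matching of a 1-2-MinGreedy execution on G, and let M* be a maximum matching of G in normal form with respect to M. Then every endpoint w of every M-augmenting path of (V, M ∪ M*) has degree at least 2 in G. -/
namespace MinGreedy

noncomputable section

open SimpleGraph

section Aux

variable {V : Type} {G : SimpleGraph V} (E : GreedyExec V G)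

/-- Edge membership in the intermediate graphs. -/
lemma mem_Gs_iff : ∀ i ≤ E.k, ∀ e : Sym2 V,
    e ∈ (E.Gs i).edgeSet ↔ e ∈ G.edgeSet ∧ ∀ j < i, E.sel j ∉ e ∧ E.oth j ∉ e := by
  intro i
  induction i with
  | zero => intro _ e; simp [E.init]
  | succ i ih =>
    intro hik e
    have hi : i < E.k := Nat.lt_of_succ_le hik
    rw [E.step i hi, SimpleGraph.edgeSet_fromEdgeSet]
    constructor
    · rintro ⟨⟨he, hs, ho⟩, -⟩
      have h := (ih (le_of_lt hi) e).1 he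
      refine ⟨h.1, fun j hj => ?_⟩
      rcases Nat.lt_succ_iff_lt_or_eq.1 hj with h' | h'
      · exact h.2 j h'
      · subst h'; exact ⟨hs, ho⟩
    · rintro ⟨heG, h⟩
      have he : e ∈ (E.Gs i).edgeSet :=
        (ih (le_of_lt hi) e).2 ⟨heG, fun j hj => h j (Nat.lt_succ_of_lt hj)⟩
      refine ⟨⟨he, (h i (Nat.lt_succ_self i)).1, (h i (Nat.lt_succ_self i)).2⟩, ?_⟩
      simpa using (E.Gs i).not_isDiag_of_mem_edgeSet he

lemma M_sub_G : ∀ e ∈ E.M, e ∈ G.edgeSet := by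
  rintro e ⟨i, hi, rfl⟩
  have h : s(E.sel i, E.oth i) ∈ (E.Gs i).edgeSet := (E.adj i hi)
  exact ((mem_Gs_iff E i (le_of_lt hi) _).1 h).1

/-- Two edges of `M` sharing a vertex are equal (auxiliary, ordered version). -/
lemma M_disj_aux {i j : ℕ} (hij : i < j) (hj : j < E.k) {x : V}
    (hxi : x ∈ s(E.sel i, E.oth i)) (hxj : x ∈ s(E.sel j, E.oth j)) : False := by
  have h : s(E.sel j, E.oth j) ∈ (E.Gs j).edgeSet := (E.adj j hj)
  have h2 := ((mem_Gs_iff E j (le_of_lt hj) _).1 h).2 i hij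
  rcases Sym2.mem_iff.1 hxi with rfl | rfl
  · exact h2.1 hxj
  · exact h2.2 hxj

/-- Two edges of `M` sharing a vertex are equal. -/
lemma M_disj {e f : Sym2 V} (he : e ∈ E.M) (hf : f ∈ E.M) {x : V}
    (hxe : x ∈ e) (hxf : x ∈ f) : e = f := by
  obtain ⟨i, hi, rfl⟩ := he
  obtain ⟨j, hj, rfl⟩ := hf
  rcases lt_trichotomy i j with h | h | h
  · exact absurd (M_disj_aux E h hj hxe hxf) (fun h => h)
  · subst h; rfl
  · exact absurd (M_disj_aux E h hi hxf hxe) (fun h => h)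

end Aux

/-- Main auxiliary lemma: the first endpoint of an augmenting path has degree ≥ 2. -/
lemma aug_deg_first {V : Type} [Fintype V] {G : SimpleGraph V}
    (E : GreedyExec V G) (h12 : E.Is12MinGreedy)
    (Mopt : Set (Sym2 V)) (hMopt : Mopt ⊆ G.edgeSet)
    (m : ℕ) (p : ℕ → V) (hp : IsAugPath E.M Mopt m p) :
    2 ≤ deg G (p 0) := by
  classical
  by_contra hlt
  push_neg at hlt
  have hdeg0 : deg G (p 0) ≤ 1 := by omega
  obtain ⟨hinj, hedges, hfree⟩ := hp
  -- every path edge is an edge of G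
  have hpath : ∀ t ≤ 2 * m, G.Adj (p t) (p (t + 1)) := by
    intro t ht
    rcases Nat.even_or_odd t with h | h
    · have := (hedges t ht).1 (Nat.even_iff.1 h)
      exact (SimpleGraph.mem_edgeSet G).1 (hMopt this)
    · have := (hedges t ht).2 (Nat.odd_iff.1 h)
      exact (SimpleGraph.mem_edgeSet G).1 (M_sub_G E _ this)
  -- path endpoints are never matched
  have hend : ∀ j < E.k, ∀ x : V, (x = E.sel j ∨ x = E.oth j) →
      x ≠ p 0 ∧ x ≠ p (2 * m + 1) := by
    intro j hj x hx
    have hxe : x ∈ s(E.sel j, E.oth j) := Sym2.mem_iff.2 hx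
    have hM : s(E.sel j, E.oth j) ∈ E.M := ⟨j, hj, rfl⟩
    have := hfree _ hM
    constructor
    · rintro rfl; exact this.1 hxe
    · rintro rfl; exact this.2 hxe
  -- some step matches some path vertex
  have hPex : ∃ j, j < E.k ∧ ∃ t ≤ 2 * m + 1, p t = E.sel j ∨ p t = E.oth j := by
    have he01 : s(p 0, p 1) ∈ G.edgeSet := (hpath 0 (Nat.zero_le _))
    have hek : s(p 0, p 1) ∉ (E.Gs E.k).edgeSet := by
      rw [E.final]; exact Set.notMem_empty _
    rw [mem_Gs_iff E E.k le_rfl] at hek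
    push_neg at hek
    obtain ⟨j, hj, hmem⟩ := hek he01
    refine ⟨j, hj, ?_⟩
    rcases Classical.em (E.sel j ∈ s(p 0, p 1)) with h | h
    · rcases Sym2.mem_iff.1 h with h' | h'
      · exact ⟨0, by omega, Or.inl h'.symm⟩
      · exact ⟨1, by omega, Or.inl h'.symm⟩
    · rcases Sym2.mem_iff.1 (hmem h) with h' | h'
      · exact ⟨0, by omega, Or.inr h'.symm⟩
      · exact ⟨1, by omega, Or.inr h'.symm⟩
  set P : ℕ → Prop := fun j => j < E.k ∧ ∃ t ≤ 2 * m + 1, p t = E.sel j ∨ p t = E.oth j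
    with hPdef
  set j := Nat.find hPex with hjdef
  obtain ⟨hjk, t, ht, htj⟩ := Nat.find_spec hPex
  have hjmin : ∀ j' < j, ∀ t' ≤ 2 * m + 1, p t' ≠ E.sel j' ∧ p t' ≠ E.oth j' := by
    intro j' hj' t' ht'
    have := Nat.find_min hPex hj'
    push_neg at this
    exact this (lt_trans hj' hjk) t' ht'
  -- the matched path vertex is an interior vertex
  have hMj : s(E.sel j, E.oth j) ∈ E.M := ⟨j, hjk, rfl⟩
  have htne := hend j hjk (p t) htj
  have ht0 : t ≠ 0 := by rintro rfl; exact htne.1 rfl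
  have htm : t ≠ 2 * m + 1 := by rintro rfl; exact htne.2 rfl
  -- find the M-edge of the path containing p t
  obtain ⟨a, ha1, ha2, haodd, hta⟩ :
      ∃ a, 1 ≤ a ∧ a ≤ 2 * m ∧ a % 2 = 1 ∧ (t = a ∨ t = a + 1) := by
    rcases Nat.even_or_odd t with h | h
    · have h2 := Nat.even_iff.1 h
      exact ⟨t - 1, by omega, by omega, by omega, Or.inr (by omega)⟩
    · have h2 := Nat.odd_iff.1 h
      exact ⟨t, by omega, by omega, h2, Or.inl rfl⟩
  have hMedge : s(p a, p (a + 1)) ∈ E.M := (hedges a ha2).2 haodd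
  have hptpath : p t ∈ s(p a, p (a + 1)) := by
    rcases hta with rfl | rfl
    · exact Sym2.mem_mk_left _ _
    · exact Sym2.mem_mk_right _ _
  have heq : s(E.sel j, E.oth j) = s(p a, p (a + 1)) :=
    M_disj E hMj hMedge (Sym2.mem_iff.2 htj) hptpath
  have hselmem : E.sel j ∈ s(p a, p (a + 1)) := by
    rw [← heq]; exact Sym2.mem_mk_left _ _
  obtain ⟨s, hs1, hs2, hsel⟩ : ∃ s, 1 ≤ s ∧ s ≤ 2 * m ∧ E.sel j = p s := by
    rcases Sym2.mem_iff.1 hselmem with h | h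
    · exact ⟨a, ha1, ha2, h⟩
    · exact ⟨a + 1, by omega, by omega, h⟩
  -- all path edges are still present in Gs j
  have hpres : ∀ u w : ℕ, u ≤ 2 * m + 1 → w ≤ 2 * m + 1 → G.Adj (p u) (p w) →
      (E.Gs j).Adj (p u) (p w) := by
    intro u w hu hw hadj
    rw [← SimpleGraph.mem_edgeSet]
    refine (mem_Gs_iff E j (le_of_lt hjk) _).2 ⟨(SimpleGraph.mem_edgeSet G).2 hadj, ?_⟩
    intro j' hj'
    constructor
    · intro hmem
      rcases Sym2.mem_iff.1 hmem with h | h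
      · exact (hjmin j' hj' u hu).1 h.symm
      · exact (hjmin j' hj' w hw).1 h.symm
    · intro hmem
      rcases Sym2.mem_iff.1 hmem with h | h
      · exact (hjmin j' hj' u hu).2 h.symm
      · exact (hjmin j' hj' w hw).2 h.symm
  -- the selected vertex has degree ≥ 2 in Gs j
  have hadjL : (E.Gs j).Adj (p s) (p (s - 1)) := by
    have h0 : G.Adj (p (s - 1)) (p (s - 1 + 1)) := hpath (s - 1) (by omega)
    have h1 : s - 1 + 1 = s := by omega
    rw [h1] at h0
    exact hpres s (s - 1) (by omega) (by omega) h0.symm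
  have hadjR : (E.Gs j).Adj (p s) (p (s + 1)) :=
    hpres s (s + 1) (by omega) (by omega) (hpath s hs2)
  have hne : p (s - 1) ≠ p (s + 1) := by
    intro h
    have := hinj (s - 1) (by omega) (s + 1) (by omega) h
    omega
  have hdegsel : 2 ≤ deg (E.Gs j) (E.sel j) := by
    rw [hsel]
    have hsub : ({p (s - 1), p (s + 1)} : Set V) ⊆ (E.Gs j).neighborSet (p s) := by
      rintro y (rfl | rfl)
      · exact hadjL
      · exact hadjR
    calc 2 = ({p (s - 1), p (s + 1)} : Set V).ncard := (Set.ncard_pair hne).symm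
      _ ≤ ((E.Gs j).neighborSet (p s)).ncard := Set.ncard_le_ncard hsub (Set.toFinite _)
  -- but p 0 has degree 1 in Gs j
  have hadj01 : (E.Gs j).Adj (p 0) (p 1) :=
    hpres 0 1 (by omega) (by omega) (hpath 0 (by omega))
  have hpos0 : 0 < deg (E.Gs j) (p 0) :=
    (Set.ncard_pos (Set.toFinite _)).2 ⟨p 1, hadj01⟩
  have hsub0 : (E.Gs j).neighborSet (p 0) ⊆ G.neighborSet (p 0) := by
    intro y hy
    have : s(p 0, y) ∈ (E.Gs j).edgeSet := (SimpleGraph.mem_edgeSet _).2 hy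
    exact ((mem_Gs_iff E j (le_of_lt hjk) _).1 this).1
  have hle0 : deg (E.Gs j) (p 0) ≤ deg G (p 0) :=
    Set.ncard_le_ncard hsub0 (Set.toFinite _)
  have hdeg0j : deg (E.Gs j) (p 0) = 1 := by omega
  have := h12 j hjk ⟨p 0, Or.inl hdeg0j⟩ (p 0) hpos0
  omega


/-- every endpoint of every M-augmenting path of (V, M ∪ M*) has degree at
least 2 in G. -/
theorem endpoint_deg_two {V : Type} [Fintype V] (G : SimpleGraph V)
    (E : GreedyExec V G) (h12 : E.Is12MinGreedy)
    (Mopt : Set (Sym2 V)) (hnf : NormalForm G E.M Mopt) :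
    ∀ (m : ℕ) (p : ℕ → V), IsAugPath E.M Mopt m p →
      2 ≤ deg G (p 0) ∧ 2 ≤ deg G (p (2 * m + 1)) := by
  intro m p hp
  have hMopt : Mopt ⊆ G.edgeSet := hnf.1.1.1
  refine ⟨aug_deg_first E h12 Mopt hMopt m p hp, ?_⟩
  set q : ℕ → V := fun jj => p (2 * m + 1 - jj) with hq
  have hq0 : q 0 = p (2 * m + 1) := by simp [hq]
  have hrev : IsAugPath E.M Mopt m q := by
    obtain ⟨hinj, hedges, hfree⟩ := hp
    refine ⟨?_, ?_, ?_⟩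
    · intro i hi j hj hij
      have := hinj (2 * m + 1 - i) (by omega) (2 * m + 1 - j) (by omega) hij
      omega
    · intro j hj
      have h1 : 2 * m + 1 - j = (2 * m - j) + 1 := by omega
      have h2 : 2 * m + 1 - (j + 1) = 2 * m - j := by omega
      have hswap : s(q j, q (j + 1)) = s(p (2 * m - j), p ((2 * m - j) + 1)) := by
        simp only [hq, h1, h2]; exact Sym2.eq_swap
      constructor
      · intro hpar
        rw [hswap]
        exact (hedges (2 * m - j) (by omega)).1 (by omega)
      · intro hpar
        rw [hswap]
        exact (hedges (2 * m - j) (by omega)).2 (by omega)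
    · intro e he
      have h := hfree e he
      have hA : q 0 = p (2 * m + 1) := by simp [hq]
      have hB : q (2 * m + 1) = p 0 := by simp [hq]
      rw [hA, hB]
      exact ⟨h.2, h.1⟩
  have := aug_deg_first E h12 Mopt hMopt m q hrev
  rwa [hq0] at this


end

end MinGreedy
end

section
/- Let G be a finite simple graph, let M be the output matching of a 1-2-MinGreedy execution on G, and let M* be a maximum matching of G in normal form with respect to M. Then every endpoint w of an M-augmenting path of (V, M ∪ M*) is the target of at least one transfer; consequently every M-augmenting path X satisfies c_X ≥ 2. -/
namespace MinGreedy

noncomputable section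

open SimpleGraph

/-!
Let `w = p 0` be an endpoint of the augmenting path `p 0, …, p (2m+1)` and suppose that no
transfer reaches `w`. If `w` had a neighbour other than `p 1`, then right after the last step
matching such a neighbour `w` would have degree at most one, and that neighbour would send a
transfer to `w`. Hence `w` keeps degree one until `p 1` is matched, and until then
1-2-MinGreedy only selects vertices of degree one. So the step picking `{p 1, p 2}` selects
`p 2`, whose only remaining neighbour is `p 1`: the vertex `p 3` was matched earlier, by a step
that again selects a degree-one vertex, namely `p 4`. Running down the path, `p (2m+1)` gets
matched, although it is not covered by `M`. Both endpoints of a path thus receive a transfer,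
which gives `c_X ≥ 2`.
-/

section Degree

variable {V : Type} {H : SimpleGraph V}

theorem deg_le_one_of_neighborSet_subset {x b : V} (h : H.neighborSet x ⊆ {b}) :
    deg H x ≤ 1 :=
  (Set.ncard_le_ncard h).trans (Set.ncard_singleton b).le

theorem eq_of_adj_of_deg_le_one [Finite V] {x y z : V} (hx : deg H x ≤ 1) (hy : H.Adj x y)
    (hz : H.Adj x z) : y = z :=
  (Set.ncard_le_one_iff (Set.toFinite _)).mp hx hy hz

theorem GreedyExec.Is12MinGreedy.deg_sel_le_one {G : SimpleGraph V} {E : GreedyExec V G}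
    (h12 : E.Is12MinGreedy) {t : ℕ} (ht : t < E.k) {w : V} (hw : deg (E.Gs t) w = 1) :
    deg (E.Gs t) (E.sel t) ≤ 1 :=
  hw ▸ h12 t ht ⟨w, Or.inl hw⟩ w (by omega)

end Degree

section Execution

variable {V : Type} {G : SimpleGraph V} (E : GreedyExec V G)

theorem GreedyExec.adj_Gs_iff {j : ℕ} (hj : j ≤ E.k) {x y : V} :
    (E.Gs j).Adj x y ↔ G.Adj x y ∧ ∀ t < j, ¬matchedAt E t x ∧ ¬matchedAt E t y := by
  induction j with
  | zero => simp [E.init]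
  | succ n ih =>
    have hn : n < E.k := hj
    rw [E.step n hn, fromEdgeSet_adj, Set.mem_ofPred_eq, mem_edgeSet, ih hn.le]
    simp only [matchedAt, Sym2.mem_iff, Nat.lt_succ_iff_lt_or_eq]
    constructor
    · rintro ⟨⟨⟨hxy, hbefore⟩, hsel, hoth⟩, -⟩
      refine ⟨hxy, fun t ht => ?_⟩
      rcases ht with ht | rfl
      · exact hbefore t ht
      · grind
    · rintro ⟨hxy, hbefore⟩
      refine ⟨⟨⟨hxy, fun t ht => hbefore t (Or.inl ht)⟩, ?_, ?_⟩, hxy.ne⟩ <;>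
        grind

theorem matchedAt.unique {t₁ t₂ : ℕ} {x : V} (h₁ : matchedAt E t₁ x)
    (h₂ : matchedAt E t₂ x) : t₁ = t₂ := by
  have not_lt_of_matchedAt :
      ∀ {s₁ s₂}, matchedAt E s₁ x → matchedAt E s₂ x → ¬s₁ < s₂ := by
    intro s₁ s₂ hs₁ hs₂ hlt
    have hfresh := ((E.adj_Gs_iff hs₂.1.le).mp (E.adj s₂ hs₂.1)).2 s₁ hlt
    rcases hs₂.2 with rfl | rfl
    exacts [hfresh.1 hs₁, hfresh.2 hs₁]
  have := not_lt_of_matchedAt h₁ h₂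
  have := not_lt_of_matchedAt h₂ h₁
  omega

theorem GreedyExec.exists_matchedAt_of_not_adj {j : ℕ} (hj : j ≤ E.k) {x y : V}
    (hxy : G.Adj x y) (h : ¬(E.Gs j).Adj x y) :
    ∃ t < j, matchedAt E t x ∨ matchedAt E t y := by
  by_contra! hfresh
  exact h ((E.adj_Gs_iff hj).mpr ⟨hxy, hfresh⟩)

theorem GreedyExec.exists_matchedAt_of_adj {x y : V} (hxy : G.Adj x y) :
    ∃ t, matchedAt E t x ∨ matchedAt E t y := by
  have hfinal : ¬(E.Gs E.k).Adj x y := fun h => by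
    simpa [E.final] using (mem_edgeSet _).mpr h
  obtain ⟨t, -, ht⟩ := E.exists_matchedAt_of_not_adj le_rfl hxy hfinal
  exact ⟨t, ht⟩

theorem GreedyExec.not_matchedAt_of_forall_notMem {x : V} (hx : ∀ e ∈ E.M, x ∉ e) (t : ℕ) :
    ¬matchedAt E t x :=
  fun ht => hx _ ⟨t, ht.1, rfl⟩ (Sym2.mem_iff.mpr ht.2)

theorem GreedyExec.eq_of_mem_M_of_matchedAt {t : ℕ} {x y : V} (hxy : s(x, y) ∈ E.M)
    (hx : matchedAt E t x) : s(x, y) = s(E.sel t, E.oth t) := by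
  obtain ⟨t', ht', heq⟩ := hxy
  have hx' : matchedAt E t' x := ⟨ht', Sym2.mem_iff.mp (heq ▸ Sym2.mem_mk_left x y)⟩
  rwa [hx'.unique E hx] at heq

/-- The last step at which a neighbour of `w` other than `b` is matched leaves `w` with
degree at most one. -/
theorem GreedyExec.exists_deg_le_one_of_adj {w b x : V}
    (hw : ∀ t, ¬matchedAt E t w) (hx : G.Adj w x) (hxb : x ≠ b) :
    ∃ t v, matchedAt E t v ∧ G.Adj w v ∧ v ≠ b ∧ deg (E.Gs (t + 1)) w ≤ 1 := by
  classical
  have hmatched : ∀ {v}, G.Adj w v → ∃ t, matchedAt E t v := fun hv =>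
    let ⟨t, ht⟩ := E.exists_matchedAt_of_adj hv
    ⟨t, ht.resolve_left (hw t)⟩
  let P t := ∃ v, matchedAt E t v ∧ G.Adj w v ∧ v ≠ b
  obtain ⟨t₀, ht₀⟩ := hmatched hx
  obtain ⟨v, hv, hwv, hvb⟩ : P (Nat.findGreatest P E.k) :=
    Nat.findGreatest_spec ht₀.1.le ⟨x, ht₀, hx, hxb⟩
  refine ⟨_, v, hv, hwv, hvb, deg_le_one_of_neighborSet_subset (b := b) fun u hu => ?_⟩
  by_contra hub
  obtain ⟨hwu, hfresh⟩ := (E.adj_Gs_iff hv.1).mp hu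
  obtain ⟨tu, htu⟩ := hmatched hwu
  have := Nat.le_findGreatest (P := P) htu.1.le ⟨u, htu, hwu, hub⟩
  exact (hfresh tu (by omega)).2 htu

/-- The domino step of the proof, for four consecutive vertices `x, y, z, u` of the path. -/
theorem GreedyExec.exists_matchedAt_lt_of_deg_sel_le_one [Finite V] {t : ℕ} {x y z u : V}
    (hsel : deg (E.Gs t) (E.sel t) ≤ 1) (hxz : x ≠ z) (hyu : y ≠ u)
    (hxy : G.Adj x y) (hyz : s(y, z) ∈ E.M) (hzu : G.Adj z u)
    (hy : matchedAt E t y) (hx : ∀ s < t, ¬matchedAt E s x) :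
    ∃ t' < t, matchedAt E t' u ∧ ∀ s < t', ¬matchedAt E s z := by
  have hpick := E.eq_of_mem_M_of_matchedAt hyz hy
  have hz : matchedAt E t z := ⟨hy.1, Sym2.mem_iff.mp (hpick ▸ Sym2.mem_mk_right y z)⟩
  have hxy_t : (E.Gs t).Adj x y :=
    (E.adj_Gs_iff hy.1.le).mpr ⟨hxy, fun s hs => ⟨hx s hs, fun h => hs.ne (h.unique E hy)⟩⟩
  have hyz_t : (E.Gs t).Adj y z := by
    rcases Sym2.eq_iff.mp hpick with ⟨rfl, rfl⟩ | ⟨rfl, rfl⟩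
    exacts [E.adj t hy.1, (E.adj t hy.1).symm]
  -- `y` has the two neighbours `x` and `z` in `E.Gs t`, so the selected vertex is `z`
  have hz_sel : z = E.sel t := by
    rcases Sym2.eq_iff.mp hpick with ⟨rfl, -⟩ | ⟨-, rfl⟩
    · exact absurd (eq_of_adj_of_deg_le_one hsel hxy_t.symm hyz_t) hxz
    · rfl
  have hzu_t : ¬(E.Gs t).Adj z u := fun h =>
    hyu (eq_of_adj_of_deg_le_one (hz_sel ▸ hsel) hyz_t.symm h)
  obtain ⟨t', ht', hmatched⟩ := E.exists_matchedAt_of_not_adj hy.1.le hzu hzu_t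
  refine ⟨t', ht', hmatched.resolve_left fun h => ht'.ne (h.unique E hz), ?_⟩
  intro s hs h
  exact (hs.trans ht').ne (h.unique E hz)

end Execution

namespace IsAugPath

variable {V : Type} {G : SimpleGraph V} {M Mopt : Set (Sym2 V)} {m : ℕ} {p : ℕ → V}

theorem ne (hp : IsAugPath M Mopt m p) {i j : ℕ} (hi : i ≤ 2 * m + 1) (hj : j ≤ 2 * m + 1)
    (hij : i ≠ j) : p i ≠ p j :=
  fun h => hij (hp.1 i hi j hj h)

theorem mem_Mopt (hp : IsAugPath M Mopt m p) {j : ℕ} (hj : j ≤ m) :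
    s(p (2 * j), p (2 * j + 1)) ∈ Mopt :=
  (hp.2.1 (2 * j) (by omega)).1 (by omega)

theorem mem_M (hp : IsAugPath M Mopt m p) {j : ℕ} (hj : j < m) :
    s(p (2 * j + 1), p (2 * j + 2)) ∈ M :=
  (hp.2.1 (2 * j + 1) (by omega)).2 (by omega)

theorem reverse (hp : IsAugPath M Mopt m p) :
    IsAugPath M Mopt m (fun j => p (2 * m + 1 - j)) := by
  obtain ⟨hinj, hedge, hend⟩ := hp
  refine ⟨fun i hi j hj h => ?_, fun j hj => ?_, fun e he => ?_⟩
  · have := hinj _ (Nat.sub_le _ i) _ (Nat.sub_le _ j) h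
    omega
  · have hflip : s(p (2 * m + 1 - j), p (2 * m + 1 - (j + 1))) =
        s(p (2 * m - j), p (2 * m - j + 1)) := by
      rw [Sym2.eq_swap, show 2 * m + 1 - (j + 1) = 2 * m - j by omega,
        show 2 * m + 1 - j = 2 * m - j + 1 by omega]
    simp only [hflip]
    exact ⟨fun _ => (hedge (2 * m - j) (by omega)).1 (by omega),
      fun _ => (hedge (2 * m - j) (by omega)).2 (by omega)⟩
  · simpa [and_comm] using hend e he

theorem not_matchedAt_start {E : GreedyExec V G} (hp : IsAugPath E.M Mopt m p) (t : ℕ) :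
    ¬matchedAt E t (p 0) :=
  E.not_matchedAt_of_forall_notMem (fun e he => (hp.2.2 e he).1) t

theorem not_matchedAt_end {E : GreedyExec V G} (hp : IsAugPath E.M Mopt m p) (t : ℕ) :
    ¬matchedAt E t (p (2 * m + 1)) :=
  E.not_matchedAt_of_forall_notMem (fun e he => (hp.2.2 e he).2) t

theorem fEdge_start (hMopt : IsMatchingSet G Mopt) (hp : IsAugPath M Mopt m p) {v : V}
    (hv : G.Adj v (p 0)) (hv1 : v ≠ p 1) : FEdge G M Mopt v (p 0) := by
  have hne : s(v, p 0) ≠ s(p 0, p 1) := by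
    rw [Ne, Sym2.eq_iff]
    rintro (⟨rfl, -⟩ | ⟨rfl, -⟩)
    exacts [hv.ne rfl, hv1 rfl]
  exact ⟨hv, fun h => (hp.2.2 _ h).1 (Sym2.mem_mk_right _ _),
    fun h => hMopt.2 _ h _ (hp.mem_Mopt (Nat.zero_le m)) hne (p 0) (Sym2.mem_mk_right _ _)
      (Sym2.mem_mk_left _ _)⟩

theorem exists_deg_sel_gt_one [Finite V] {E : GreedyExec V G} (hMopt : Mopt ⊆ G.edgeSet)
    (hp : IsAugPath E.M Mopt m p) {i : ℕ} (hi : matchedAt E i (p 1)) :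
    ∃ t ≤ i, t < E.k ∧ 1 < deg (E.Gs t) (E.sel t) := by
  by_contra! hsel
  have hadj : ∀ {j}, j ≤ m → G.Adj (p (2 * j)) (p (2 * j + 1)) := fun hj =>
    hMopt (hp.mem_Mopt hj)
  have chain : ∀ d ≤ m, ∃ t ≤ i, matchedAt E t (p (2 * d + 1)) ∧
      ∀ s < t, ¬matchedAt E s (p (2 * d)) := by
    intro d hd
    induction d with
    | zero =>
      exact ⟨i, le_rfl, hi, fun s _ => hp.not_matchedAt_start s⟩
    | succ d ih =>
      obtain ⟨t, hti, ht, hfresh⟩ := ih (by omega)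
      obtain ⟨t', ht't, ht', hfresh'⟩ := E.exists_matchedAt_lt_of_deg_sel_le_one
        (hsel t hti ht.1) (hp.ne (by omega) (by omega) (by omega))
        (hp.ne (by omega) (by omega) (by omega)) (hadj (by omega)) (hp.mem_M (by omega))
        (hadj hd) ht hfresh
      exact ⟨t', by omega, ht', hfresh'⟩
  obtain ⟨t, -, ht, -⟩ := chain m le_rfl
  exact hp.not_matchedAt_end t ht

theorem exists_transfer_start [Finite V] {E : GreedyExec V G} (h12 : E.Is12MinGreedy)
    (hMopt : IsMatchingSet G Mopt) (hp : IsAugPath E.M Mopt m p) :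
    ∃ v, IsTransfer E E.M Mopt v (p 0) := by
  by_contra! hno
  have hp0 := hp.not_matchedAt_start
  have h01 : G.Adj (p 0) (p 1) := hMopt.1 (hp.mem_Mopt (Nat.zero_le m))
  obtain ⟨i, hi⟩ := E.exists_matchedAt_of_adj h01
  replace hi := hi.resolve_left (hp0 i)
  have hnbr : ∀ x, G.Adj (p 0) x → x = p 1 := by
    intro x hx
    by_contra hx1
    obtain ⟨t, v, hv, hwv, hv1, hdeg⟩ := E.exists_deg_le_one_of_adj hp0 hx hx1
    exact hno v ⟨t, hp.fEdge_start hMopt hwv.symm hv1, ⟨m, p, hp, Or.inl rfl⟩, hv, hdeg⟩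
  have hdeg : ∀ t ≤ i, deg (E.Gs t) (p 0) = 1 := by
    intro t hti
    have hnbrs : (E.Gs t).neighborSet (p 0) = {p 1} := by
      ext x
      rw [mem_neighborSet, Set.mem_singleton_iff, E.adj_Gs_iff (hti.trans hi.1.le)]
      refine ⟨fun h => hnbr x h.1, ?_⟩
      rintro rfl
      exact ⟨h01, fun s hs => ⟨hp0 s, fun h => (hs.trans_le hti).ne (h.unique E hi)⟩⟩
    rw [deg, hnbrs, Set.ncard_singleton]
  obtain ⟨t, hti, htk, hgt⟩ := hp.exists_deg_sel_gt_one hMopt.1 hi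
  exact absurd (h12.deg_sel_le_one htk (hdeg t hti)) hgt.not_ge

end IsAugPath

theorem two_le_credits {V : Type} [Finite V] {G : SimpleGraph V} {E : GreedyExec V G}
    {M Mopt : Set (Sym2 V)} {X : Set V} {v₁ w₁ v₂ w₂ : V} (h₁ : IsTransfer E M Mopt v₁ w₁)
    (h₂ : IsTransfer E M Mopt v₂ w₂) (hw₁ : w₁ ∈ X) (hw₂ : w₂ ∈ X) (hne : w₁ ≠ w₂) : 2 ≤ credits E M Mopt X :=
  (Set.one_lt_ncard (Set.toFinite _)).mpr
    ⟨(v₁, w₁), ⟨h₁, hw₁⟩, (v₂, w₂), ⟨h₂, hw₂⟩, fun h => hne (congrArg Prod.snd h)⟩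

/-- every endpoint of an M-augmenting path is the target of at least one
transfer; consequently every M-augmenting path X satisfies c_X ≥ 2. -/
theorem endpoint_credit {V : Type} [Fintype V] (G : SimpleGraph V)
    (E : GreedyExec V G) (h12 : E.Is12MinGreedy)
    (Mopt : Set (Sym2 V)) (hnf : NormalForm G E.M Mopt) :
    (∀ w : V, IsPathEndpoint E.M Mopt w → ∃ v : V, IsTransfer E E.M Mopt v w) ∧
    (∀ (m : ℕ) (p : ℕ → V), IsAugPath E.M Mopt m p →
      2 ≤ credits E E.M Mopt (pathSupp m p)) := by
  have hstart : ∀ {m p}, IsAugPath E.M Mopt m p → ∃ v, IsTransfer E E.M Mopt v (p 0) :=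
    fun hp => hp.exists_transfer_start h12 hnf.1.1
  have hend : ∀ {m p}, IsAugPath E.M Mopt m p →
      ∃ v, IsTransfer E E.M Mopt v (p (2 * m + 1)) := fun hp => by
    simpa using hstart hp.reverse
  refine ⟨?_, fun m p hp => ?_⟩
  · rintro w ⟨m, p, hp, rfl | rfl⟩
    exacts [hstart hp, hend hp]
  · obtain ⟨v₁, h₁⟩ := hstart hp
    obtain ⟨v₂, h₂⟩ := hend hp
    exact two_le_credits h₁ h₂ ⟨0, Nat.zero_le _, rfl⟩ ⟨2 * m + 1, Nat.le_refl _, rfl⟩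
      (hp.ne (Nat.zero_le _) le_rfl (by omega))

end

end MinGreedy
end

section
/- Let G have maximum degree at most 3, let M be the output matching of a 1-2-MinGreedy execution on G, and let M* be a maximum matching of G in normal form with respect to M. Let X be a connected component of (V, M ∪ M*), define D_X = 4 if X is a singleton and D_X = 2·m_X if X is an M-augmenting path with m_X edges of M, and let i be the creation step of X with selected vertex u_i. Then d_X ≤ D_X − 2 holds in each of the following cases: (a) the degree of u_i in G_{i-1} equals 1; (b) the degree of u_i in G_{i-1} equals 3; (c) X is a singleton. -/
/-!
Transfers from a vertex matched in step `i` go to distinct neighbours other than its partner;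
their targets are never matched and keep at most one edge after step `i`. If a target keeps
exactly one, 1-2-MinGreedy selects a vertex of degree 1 in step `i + 1`, and when all positive
degrees were at least 2 in step `i`, that vertex has just lost an edge to the pair matched in
step `i`.

Singleton `{u, v}` with `u` selected: `u` has fewer transfers than its degree, `v` at most two.
If `u` has degree 2 and a transfer, two transfers from `v` would leave a target with one edge,
and the vertex selected next would be a neighbour of `u` or `v`, all of which are matched already
or never matched. If `u` has degree 3, all non-isolated vertices have degree 3, every target is
adjacent to both `u` and `v`, and two targets of the same vertex again leave no candidate for the
next selection.

Augmenting path: none of its vertices is matched before the creation step, so the selected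
vertex `u` still has its `M*`-edge besides its partner `v`. Degree 1 is thus impossible, and
degree 3 makes all non-isolated vertices have degree 3. A transfer from `u` then forces the next
selected vertex to be the `M*`-neighbour `z` of `u`, which is joined to `v` by an `F`-edge; an
internal vertex has only one `F`-edge, so `z` has no transfer. As `u` and `v` cannot both have
transfers, two internal vertices have none, and every other internal vertex has at most one.
-/

namespace MinGreedy

noncomputable section

open SimpleGraph

section SetCard

variable {α : Type*} [Finite α] {s : Set α} {a b c d : α}

theorem eq_or_eq_of_ncard_le_two (hs : s.ncard ≤ 2) (ha : a ∈ s) (hb : b ∈ s) (hab : a ≠ b)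
    (hc : c ∈ s) : c = a ∨ c = b := by
  have hpair : ({a, b} : Set α) = s :=
    Set.eq_of_subset_of_ncard_le (Set.insert_subset ha (Set.singleton_subset_iff.2 hb))
      (by rwa [Set.ncard_pair hab])
  simpa [← hpair] using hc

theorem eq_or_eq_or_eq_of_ncard_le_three (hs : s.ncard ≤ 3) (ha : a ∈ s) (hb : b ∈ s)
    (hc : c ∈ s) (hab : a ≠ b) (hac : a ≠ c) (hbc : b ≠ c) (hd : d ∈ s) :
    d = a ∨ d = b ∨ d = c := by
  have htriple : ({a, b, c} : Set α) = s :=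
    Set.eq_of_subset_of_ncard_le
      (Set.insert_subset ha (Set.insert_subset hb (Set.singleton_subset_iff.2 hc)))
      (by rwa [Set.ncard_eq_three.2 ⟨a, b, c, hab, hac, hbc, rfl⟩])
  simpa [← htriple] using hd

end SetCard

theorem deg_mono {V : Type} [Finite V] {H H' : SimpleGraph V} (h : H ≤ H') (x : V) :
    deg H x ≤ deg H' x :=
  Set.ncard_le_ncard fun _ hy => h hy

theorem deg_pos_of_adj {V : Type} [Finite V] {H : SimpleGraph V} {x y : V} (h : H.Adj x y) :
    0 < deg H x :=
  (Set.ncard_pos).2 ⟨y, h⟩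

theorem two_le_deg_of_adj {V : Type} [Finite V] {H : SimpleGraph V} {x y z : V}
    (hy : H.Adj x y) (hz : H.Adj x z) (hyz : y ≠ z) : 2 ≤ deg H x := by
  have := Set.ncard_le_ncard (Set.insert_subset hy (Set.singleton_subset_iff.2 hz))
    (t := H.neighborSet x)
  rwa [Set.ncard_pair hyz] at this

theorem IsMatchingSet.eq_of_mem {V : Type} {G : SimpleGraph V} {M : Set (Sym2 V)}
    (hM : IsMatchingSet G M) {e f : Sym2 V} (he : e ∈ M) (hf : f ∈ M) {x : V} (hxe : x ∈ e)
    (hxf : x ∈ f) : e = f :=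
  by_contra fun h => hM.2 e he f hf h x hxe hxf

def GreedyExec.IsCubicAt {V : Type} {G : SimpleGraph V} (E : GreedyExec V G) (i : ℕ) : Prop :=
  ∀ x, 0 < deg (E.Gs i) x → deg (E.Gs i) x = 3

namespace GreedyExec

variable {V : Type} {G : SimpleGraph V} (E : GreedyExec V G) {i j : ℕ} {x y z : V}

theorem adj_succ_iff (hi : i < E.k) :
    (E.Gs (i + 1)).Adj x y ↔ (E.Gs i).Adj x y ∧ ¬matchedAt E i x ∧ ¬matchedAt E i y := by
  rw [E.step i hi, fromEdgeSet_adj]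
  simp only [matchedAt, hi, true_and, Set.mem_ofPred_eq, mem_edgeSet, Sym2.mem_iff]
  constructor
  · rintro ⟨⟨hxy, hs, ho⟩, -⟩
    exact ⟨hxy, by tauto, by tauto⟩
  · rintro ⟨hxy, hx, hy⟩
    exact ⟨⟨hxy, by tauto, by tauto⟩, hxy.ne⟩

theorem Gs_anti (hij : i ≤ j) (hj : j ≤ E.k) : E.Gs j ≤ E.Gs i := by
  induction j, hij using Nat.le_induction with
  | base => exact le_rfl
  | succ j hij ih =>
    exact le_trans (fun x y h => ((E.adj_succ_iff (by omega)).1 h).1) (ih (by omega))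

theorem Gs_le (hi : i ≤ E.k) : E.Gs i ≤ G := by
  simpa only [E.init] using E.Gs_anti (Nat.zero_le i) hi

theorem lt_k_of_adj (hi : i ≤ E.k) (h : (E.Gs i).Adj x y) : i < E.k := by
  refine lt_of_le_of_ne hi ?_
  rintro rfl
  have : s(x, y) ∈ (E.Gs E.k).edgeSet := h
  simp [E.final] at this

theorem not_adj_succ_of_matchedAt (hx : matchedAt E i x) : ¬(E.Gs (i + 1)).Adj x y :=
  fun h => ((E.adj_succ_iff hx.1).1 h).2.1 hx

theorem exists_partner (hx : matchedAt E i x) : ∃ y, matchedAt E i y ∧ (E.Gs i).Adj x y := by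
  obtain ⟨hi, rfl | rfl⟩ := hx
  · exact ⟨E.oth i, ⟨hi, Or.inr rfl⟩, E.adj i hi⟩
  · exact ⟨E.sel i, ⟨hi, Or.inl rfl⟩, (E.adj i hi).symm⟩

theorem matchedAt_inj (hi : matchedAt E i x) (hj : matchedAt E j x) : i = j := by
  wlog hij : i < j generalizing i j
  · rcases Nat.lt_or_ge j i with h | h
    · exact (this hj hi h).symm
    · omega
  obtain ⟨y, -, hxy⟩ := E.exists_partner hj
  exact absurd (E.Gs_anti (by omega : i + 1 ≤ j) hj.1.le hxy) (E.not_adj_succ_of_matchedAt hi)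

theorem eq_of_mem_M (hx : matchedAt E i x) {e : Sym2 V} (he : e ∈ E.M) (hxe : x ∈ e) :
    e = s(E.sel i, E.oth i) := by
  obtain ⟨j, hj, rfl⟩ := he
  rw [E.matchedAt_inj ⟨hj, Sym2.mem_iff.1 hxe⟩ hx]

theorem eq_oth_of_mem_M (hi : i < E.k) (h : s(E.sel i, y) ∈ E.M) : y = E.oth i :=
  Sym2.congr_right.1 (E.eq_of_mem_M ⟨hi, Or.inl rfl⟩ h (Sym2.mem_mk_left _ _))

theorem matchedAt_iff_of_mem_M (hx : matchedAt E i x) (he : s(x, y) ∈ E.M) :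
    matchedAt E i z ↔ z = x ∨ z = y := by
  rw [← Sym2.mem_iff, E.eq_of_mem_M hx he (Sym2.mem_mk_left _ _), Sym2.mem_iff]
  exact ⟨fun h => h.2, fun h => ⟨hx.1, h⟩⟩

theorem M_subset_edgeSet : E.M ⊆ G.edgeSet := by
  rintro _ ⟨i, hi, rfl⟩
  exact E.Gs_le hi.le (E.adj i hi)

theorem adj_of_not_matchedAt (hi : i ≤ E.k) (h : G.Adj x y) (hx : ∀ j < i, ¬matchedAt E j x)
    (hy : ∀ j < i, ¬matchedAt E j y) : (E.Gs i).Adj x y := by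
  induction i with
  | zero => rwa [E.init]
  | succ i ih =>
    exact (E.adj_succ_iff (by omega)).2 ⟨ih (by omega) (fun j hj => hx j (by omega))
      (fun j hj => hy j (by omega)), hx i (by omega), hy i (by omega)⟩

theorem deg_le_three [Finite V] (hdeg : maxDegLE G 3) (hi : i ≤ E.k) (x : V) :
    deg (E.Gs i) x ≤ 3 :=
  (deg_mono (E.Gs_le hi) x).trans (hdeg x)

theorem deg_succ_eq_zero_of_matchedAt (hx : matchedAt E i x) : deg (E.Gs (i + 1)) x = 0 := by
  have : (E.Gs (i + 1)).neighborSet x = ∅ :=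
    Set.eq_empty_of_forall_notMem fun _ hy => E.not_adj_succ_of_matchedAt hx hy
  simp [deg, this]

theorem deg_le_deg_succ_add [Finite V] (hi : i < E.k) (hx : ¬matchedAt E i x) {S : Set V}
    (hS : ∀ y, matchedAt E i y → (E.Gs i).Adj x y → y ∈ S) :
    deg (E.Gs i) x ≤ deg (E.Gs (i + 1)) x + S.ncard := by
  refine (Set.ncard_le_ncard (t := (E.Gs (i + 1)).neighborSet x ∪ S) fun y hy => ?_).trans
    (Set.ncard_union_le _ _)
  by_cases hy' : matchedAt E i y
  · exact Or.inr (hS y hy' hy)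
  · exact Or.inl ((E.adj_succ_iff hi).2 ⟨hy, hx, hy'⟩)

theorem deg_le_deg_succ_add_two [Finite V] (hi : i < E.k) (hx : ¬matchedAt E i x) :
    deg (E.Gs i) x ≤ deg (E.Gs (i + 1)) x + 2 := by
  simpa [Set.ncard_pair (E.adj i hi).ne] using
    E.deg_le_deg_succ_add hi hx (S := {E.sel i, E.oth i}) fun _ hy _ => hy.2

theorem deg_sel_le (h12 : E.Is12MinGreedy) (hi : i < E.k) (hx : 0 < deg (E.Gs i) x)
    (hx2 : deg (E.Gs i) x ≤ 2) : deg (E.Gs i) (E.sel i) ≤ deg (E.Gs i) x :=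
  h12 i hi ⟨x, by omega⟩ x hx

theorem isCubicAt_of_deg_sel_eq_three [Finite V] (hdeg : maxDegLE G 3)
    (h12 : E.Is12MinGreedy) (hi : i < E.k) (h3 : deg (E.Gs i) (E.sel i) = 3) :
    E.IsCubicAt i := by
  intro x hx
  have := E.deg_le_three hdeg hi.le x
  by_contra h
  have := E.deg_sel_le h12 hi hx (by omega)
  omega

theorem deg_sel_succ_eq_one [Finite V] (h12 : E.Is12MinGreedy) (hi : i < E.k)
    (hx : deg (E.Gs (i + 1)) x = 1) : i + 1 < E.k ∧ deg (E.Gs (i + 1)) (E.sel (i + 1)) = 1 := by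
  obtain ⟨y, hy⟩ := (Set.ncard_pos (s := (E.Gs (i + 1)).neighborSet x)).1
    (by unfold deg at hx; omega)
  have hk : i + 1 < E.k := E.lt_k_of_adj hi hy
  have := E.deg_sel_le h12 hk (x := x) (by omega) (by omega)
  have := deg_pos_of_adj (E.adj (i + 1) hk)
  exact ⟨hk, by omega⟩

theorem adj_of_isCubicAt [Finite V] (hi : i < E.k) (hcub : E.IsCubicAt i)
    (hx : ¬matchedAt E i x) (hpos : 0 < deg (E.Gs i) x) (h1 : deg (E.Gs (i + 1)) x ≤ 1) {c : V}
    (hc : matchedAt E i c) : (E.Gs i).Adj x c := by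
  by_contra hxc
  have hcard : ({E.sel i, E.oth i} \ {c} : Set V).ncard = 1 := by
    rw [Set.ncard_sdiff_singleton_of_mem (show c ∈ ({E.sel i, E.oth i} : Set V) from hc.2),
      Set.ncard_pair (E.adj i hi).ne]
  have := E.deg_le_deg_succ_add hi hx (S := {E.sel i, E.oth i} \ {c})
    fun y hy hxy => ⟨hy.2, fun hyc => hxc (hyc ▸ hxy)⟩
  rw [hcard, hcub x hpos] at this
  omega

theorem not_matchedAt_of_deg_succ_pos (hx : 0 < deg (E.Gs (i + 1)) x) : ¬matchedAt E i x :=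
  fun h => by simp [E.deg_succ_eq_zero_of_matchedAt h] at hx

theorem deg_pos_of_deg_succ_pos [Finite V] (hi : i < E.k) (hx : 0 < deg (E.Gs (i + 1)) x) :
    0 < deg (E.Gs i) x :=
  hx.trans_le (deg_mono (E.Gs_anti (Nat.le_succ i) hi) x)

theorem sel_succ_adj_of_two_le [Finite V] (h12 : E.Is12MinGreedy) (hi : i < E.k)
    (hmin : ∀ y, 0 < deg (E.Gs i) y → 2 ≤ deg (E.Gs i) y) (hx : deg (E.Gs (i + 1)) x = 1) :
    i + 1 < E.k ∧ ∃ d, matchedAt E i d ∧ (E.Gs i).Adj (E.sel (i + 1)) d := by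
  obtain ⟨hk, hs⟩ := E.deg_sel_succ_eq_one h12 hi hx
  refine ⟨hk, ?_⟩
  by_contra! h
  have hle := E.deg_le_deg_succ_add hi (E.not_matchedAt_of_deg_succ_pos (by omega)) (S := ∅)
    fun d hd hsd => absurd hsd (h d hd)
  have := hmin (E.sel (i + 1)) (E.deg_pos_of_deg_succ_pos hi (by omega))
  rw [Set.ncard_empty] at hle
  omega

theorem sel_succ_adj_of_isCubicAt [Finite V] (h12 : E.Is12MinGreedy) (hi : i < E.k)
    (hcub : E.IsCubicAt i) (hx : deg (E.Gs (i + 1)) x = 1) :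
    i + 1 < E.k ∧ ∀ d, matchedAt E i d → (E.Gs i).Adj (E.sel (i + 1)) d := by
  obtain ⟨hk, hs⟩ := E.deg_sel_succ_eq_one h12 hi hx
  exact ⟨hk, fun d => E.adj_of_isCubicAt hi hcub (E.not_matchedAt_of_deg_succ_pos (by omega))
    (E.deg_pos_of_deg_succ_pos hi (by omega)) hs.le⟩

end GreedyExec

section Transfers

variable {V : Type} {G : SimpleGraph V} {E : GreedyExec V G} {M Mopt : Set (Sym2 V)} {i : ℕ}
  {c w : V}

theorem IsPathEndpoint.not_matchedAt (h : IsPathEndpoint E.M Mopt w) (j : ℕ) :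
    ¬matchedAt E j w := by
  obtain ⟨m, p, ⟨-, -, hM⟩, hw⟩ := h
  intro hj
  have hMe : s(E.sel j, E.oth j) ∈ E.M := ⟨j, hj.1, rfl⟩
  have hwe : w ∈ s(E.sel j, E.oth j) := Sym2.mem_iff.2 hj.2
  rcases hw with rfl | rfl
  exacts [(hM _ hMe).1 hwe, (hM _ hMe).2 hwe]

theorem IsTransfer.transferAt (h : IsTransfer E M Mopt c w) (hc : matchedAt E i c) :
    transferAt E M Mopt i c w := by
  obtain ⟨j, hj⟩ := h
  rwa [E.matchedAt_inj hc hj.2.2.1]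

theorem transferAt.not_matchedAt (h : transferAt E E.M Mopt i c w) (j : ℕ) :
    ¬matchedAt E j w :=
  h.2.1.not_matchedAt j

theorem transferAt.adj (h : transferAt E E.M Mopt i c w) : (E.Gs i).Adj c w := by
  obtain ⟨hF, hw, hc, -⟩ := h
  exact E.adj_of_not_matchedAt hc.1.le (G.mem_edgeSet.1 hF.1)
    (fun j hj hcj => hj.ne (E.matchedAt_inj hcj hc)) fun j _ => hw.not_matchedAt j

theorem sel_succ_eq_of_transferAt [Finite V] (hdeg : maxDegLE G 3) (h12 : E.Is12MinGreedy)
    (hcub : E.IsCubicAt i) (hw : transferAt E E.M Mopt i c w) {z : V} (hz : (E.Gs i).Adj c z)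
    (hzi : ¬matchedAt E i z) (hwz : w ≠ z) :
    i + 1 < E.k ∧ E.sel (i + 1) = z ∧ ∀ d, matchedAt E i d → (E.Gs i).Adj z d := by
  have hc := hw.2.2.1
  have hi := hc.1
  have hw1 : deg (E.Gs (i + 1)) w = 1 := by
    have := E.deg_le_deg_succ_add_two hi (hw.not_matchedAt i)
    rw [hcub w (deg_pos_of_adj hw.adj.symm)] at this
    have := hw.2.2.2
    omega
  obtain ⟨hk, hs⟩ := E.sel_succ_adj_of_isCubicAt h12 hi hcub hw1
  obtain ⟨c', hc', hcc'⟩ := E.exists_partner hc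
  -- `sel (i + 1)` is a neighbour of `c` other than `c'` and `w`; as `deg c ≤ 3`, it is `z`
  rcases eq_or_eq_or_eq_of_ncard_le_three (E.deg_le_three hdeg hi.le c) hcc' hz hw.adj
      (fun h => hzi (h ▸ hc')) (fun h => hw.not_matchedAt i (h ▸ hc')) hwz.symm
      (hs c hc).symm with h | h | h
  · exact absurd (h ▸ hs c' hc') (SimpleGraph.irrefl _)
  · exact ⟨hk, h, h ▸ hs⟩
  · exact absurd (h ▸ ⟨hk, Or.inl rfl⟩) (hw.not_matchedAt (i + 1))

end Transfers

def transferTargets {V : Type} {G : SimpleGraph V} (E : GreedyExec V G)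
    (M Mopt : Set (Sym2 V)) (c : V) : Set V :=
  {w | IsTransfer E M Mopt c w}

section Singleton

variable {V : Type} [Finite V] {G : SimpleGraph V} {E : GreedyExec V G} {Mopt : Set (Sym2 V)}
  {i : ℕ} {c : V}

theorem debits_pair_le (M : Set (Sym2 V)) (u v : V) :
    debits E M Mopt {u, v} ≤
      (transferTargets E M Mopt u).ncard + (transferTargets E M Mopt v).ncard := by
  refine (Set.ncard_le_ncard (t := Prod.mk u '' transferTargets E M Mopt u ∪
    Prod.mk v '' transferTargets E M Mopt v) ?_).trans
    ((Set.ncard_union_le _ _).trans (add_le_add Set.ncard_image_le Set.ncard_image_le))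
  rintro ⟨x, w⟩ ⟨hxw, rfl | rfl⟩
  exacts [Or.inl ⟨w, hxw, rfl⟩, Or.inr ⟨w, hxw, rfl⟩]

theorem ncard_transferTargets_lt (hc : matchedAt E i c) :
    (transferTargets E E.M Mopt c).ncard < deg (E.Gs i) c := by
  obtain ⟨c', hc', hcc'⟩ := E.exists_partner hc
  have hsub : transferTargets E E.M Mopt c ⊆ (E.Gs i).neighborSet c \ {c'} := fun w hw =>
    ⟨(hw.transferAt hc).adj, fun h => (hw.transferAt hc).not_matchedAt i (h ▸ hc')⟩
  exact (Set.ncard_le_ncard hsub).trans_lt (Set.ncard_sdiff_singleton_lt_of_mem hcc')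

theorem ncard_transferTargets_le_one_of_isCubicAt (hdeg : maxDegLE G 3) (h12 : E.Is12MinGreedy)
    (hcub : E.IsCubicAt i) (hc : matchedAt E i c) :
    (transferTargets E E.M Mopt c).ncard ≤ 1 := by
  refine (Set.ncard_le_one).2 fun w₁ h₁ w₂ h₂ => by_contra fun hne => ?_
  have h₂ := h₂.transferAt hc
  obtain ⟨hk, hsel, -⟩ := sel_succ_eq_of_transferAt hdeg h12 hcub (h₁.transferAt hc) h₂.adj
    (h₂.not_matchedAt i) hne
  exact h₂.not_matchedAt (i + 1) ⟨hk, Or.inl hsel.symm⟩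

theorem ncard_transferTargets_oth_le_one (hdeg : maxDegLE G 3) (h12 : E.Is12MinGreedy)
    (hi : i < E.k) (h2 : deg (E.Gs i) (E.sel i) = 2) {a : V}
    (ha : a ∈ transferTargets E E.M Mopt (E.sel i)) :
    (transferTargets E E.M Mopt (E.oth i)).ncard ≤ 1 := by
  have hu : matchedAt E i (E.sel i) := ⟨hi, Or.inl rfl⟩
  have hv : matchedAt E i (E.oth i) := ⟨hi, Or.inr rfl⟩
  have hmin : ∀ x, 0 < deg (E.Gs i) x → 2 ≤ deg (E.Gs i) x := fun x hx => by
    by_contra h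
    have := E.deg_sel_le h12 hi hx (by omega)
    omega
  have ha := ha.transferAt hu
  have hnbr_u : ∀ y, (E.Gs i).Adj (E.sel i) y → y = E.oth i ∨ y = a := fun y hy =>
    eq_or_eq_of_ncard_le_two h2.le (E.adj i hi) ha.adj
      (fun h => ha.not_matchedAt i (h ▸ hv)) hy
  refine (Set.ncard_le_one).2 fun w₁ h₁ w₂ h₂ => by_contra fun hne => ?_
  have h₁ := h₁.transferAt hv
  have h₂ := h₂.transferAt hv
  -- `sel i` has only one neighbour besides `oth i`, so some target `w` misses it
  obtain ⟨w, hw, hwu⟩ : ∃ w, transferAt E E.M Mopt i (E.oth i) w ∧ ¬(E.Gs i).Adj w (E.sel i) := by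
    by_contra! h
    have e₁ := (hnbr_u w₁ (h w₁ h₁).symm).resolve_left fun e => h₁.not_matchedAt i (e ▸ hv)
    have e₂ := (hnbr_u w₂ (h w₂ h₂).symm).resolve_left fun e => h₂.not_matchedAt i (e ▸ hv)
    exact hne (e₁.trans e₂.symm)
  have hw1 : deg (E.Gs (i + 1)) w = 1 := by
    have hle := E.deg_le_deg_succ_add hi (hw.not_matchedAt i) (S := {E.oth i})
      fun y hy hwy => hy.2.resolve_left fun e => hwu (e ▸ hwy)
    have := hmin w (deg_pos_of_adj hw.adj.symm)
    have := hw.2.2.2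
    rw [Set.ncard_singleton] at hle
    omega
  obtain ⟨hk, d, hd, hsd⟩ := E.sel_succ_adj_of_two_le h12 hi hmin hw1
  have hs : matchedAt E (i + 1) (E.sel (i + 1)) := ⟨hk, Or.inl rfl⟩
  have hsi : ¬matchedAt E i (E.sel (i + 1)) := fun h => by
    simpa using E.matchedAt_inj h hs
  rcases hd.2 with rfl | rfl
  · rcases hnbr_u _ hsd.symm with h | h
    · exact hsi (h ▸ hv)
    · exact ha.not_matchedAt (i + 1) (h ▸ hs)
  · rcases eq_or_eq_or_eq_of_ncard_le_three (E.deg_le_three hdeg hi.le _) (E.adj i hi).symm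
        h₁.adj h₂.adj (fun e => h₁.not_matchedAt i (e ▸ hu))
        (fun e => h₂.not_matchedAt i (e ▸ hu)) hne hsd.symm with h | h | h
    · exact hsi (h ▸ hu)
    · exact h₁.not_matchedAt (i + 1) (h ▸ hs)
    · exact h₂.not_matchedAt (i + 1) (h ▸ hs)

theorem debits_singleton_le (hdeg : maxDegLE G 3) (h12 : E.Is12MinGreedy) {x y : V}
    (hxy : s(x, y) ∈ E.M) : debits E E.M Mopt {x, y} ≤ 2 := by
  obtain ⟨i, hi, he⟩ := hxy
  have hpair : ({x, y} : Set V) = {E.sel i, E.oth i} := by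
    rcases Sym2.eq_iff.1 he with ⟨rfl, rfl⟩ | ⟨rfl, rfl⟩
    exacts [rfl, Set.pair_comm _ _]
  rw [hpair]
  refine (debits_pair_le _ _ _).trans ?_
  have hu : matchedAt E i (E.sel i) := ⟨hi, Or.inl rfl⟩
  have hv : matchedAt E i (E.oth i) := ⟨hi, Or.inr rfl⟩
  have hbu := ncard_transferTargets_lt (Mopt := Mopt) hu
  have hbv := ncard_transferTargets_lt (Mopt := Mopt) hv
  have h3u := E.deg_le_three hdeg hi.le (E.sel i)
  have h3v := E.deg_le_three hdeg hi.le (E.oth i)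
  rcases (transferTargets E E.M Mopt (E.sel i)).eq_empty_or_nonempty with hnone | ⟨a, ha⟩
  · rw [hnone, Set.ncard_empty]
    omega
  by_cases h3 : deg (E.Gs i) (E.sel i) = 3
  · have hcub := E.isCubicAt_of_deg_sel_eq_three hdeg h12 hi h3
    have := ncard_transferTargets_le_one_of_isCubicAt (Mopt := Mopt) hdeg h12 hcub hu
    have := ncard_transferTargets_le_one_of_isCubicAt (Mopt := Mopt) hdeg h12 hcub hv
    omega
  · have h2 : deg (E.Gs i) (E.sel i) = 2 := by
      have := (Set.ncard_pos).2 ⟨a, ha⟩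
      omega
    have := ncard_transferTargets_oth_le_one hdeg h12 hi h2 ha
    omega

end Singleton

/- On an augmenting path `p 0, …, p (2m+1)`, the internal vertex `p t` is joined to
`p (mNbr t)` by an edge of `M`, and every vertex `p t` to `p (optNbr t)` by an edge of `Mopt`. -/
def mNbr (t : ℕ) : ℕ := if t % 2 = 1 then t + 1 else t - 1

def optNbr (t : ℕ) : ℕ := if t % 2 = 0 then t + 1 else t - 1

theorem mNbr_ne {t : ℕ} (ht : 1 ≤ t) : mNbr t ≠ t := by
  unfold mNbr; split_ifs <;> omega

theorem mNbr_mNbr {t : ℕ} (ht : 1 ≤ t) : mNbr (mNbr t) = t := by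
  unfold mNbr; split_ifs <;> omega

theorem mNbr_mem_Icc {t m : ℕ} (h1 : 1 ≤ t) (h2 : t ≤ 2 * m) : 1 ≤ mNbr t ∧ mNbr t ≤ 2 * m := by
  unfold mNbr; split_ifs <;> omega

theorem optNbr_ne (t : ℕ) : optNbr t ≠ t := by
  unfold optNbr; split_ifs <;> omega

theorem optNbr_le {t m : ℕ} (ht : t ≤ 2 * m + 1) : optNbr t ≤ 2 * m + 1 := by
  unfold optNbr; split_ifs <;> omega

theorem mNbr_ne_optNbr (t : ℕ) : mNbr t ≠ optNbr t := by
  unfold mNbr optNbr; split_ifs <;> omega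

theorem optNbr_mNbr_ne {t : ℕ} (ht : 1 ≤ t) : optNbr (mNbr t) ≠ optNbr t := by
  unfold mNbr optNbr; split_ifs <;> omega

namespace IsAugPath

variable {V : Type} {M Mopt : Set (Sym2 V)} {m : ℕ} {p : ℕ → V}
  (hP : IsAugPath M Mopt m p) {s t : ℕ}
include hP

theorem inj (hs : s ≤ 2 * m + 1) (ht : t ≤ 2 * m + 1) : p s = p t ↔ s = t :=
  ⟨hP.1 s hs t ht, congrArg p⟩

theorem mem_M_s8 (h1 : 1 ≤ t) (h2 : t ≤ 2 * m) : s(p t, p (mNbr t)) ∈ M := by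
  unfold mNbr
  split_ifs with h
  · exact (hP.2.1 t h2).2 h
  · have := (hP.2.1 (t - 1) (by omega)).2 (by omega)
    rwa [Nat.sub_add_cancel h1, Sym2.eq_swap] at this

theorem mem_opt (ht : t ≤ 2 * m + 1) : s(p t, p (optNbr t)) ∈ Mopt := by
  unfold optNbr
  split_ifs with h
  · exact (hP.2.1 t (by omega)).1 h
  · have := (hP.2.1 (t - 1) (by omega)).1 (by omega)
    rwa [Nat.sub_add_cancel (by omega), Sym2.eq_swap] at this

end IsAugPath

section AugPath

variable {V : Type} {G : SimpleGraph V} {E : GreedyExec V G} {Mopt : Set (Sym2 V)} {m : ℕ}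
  {p : ℕ → V} {i j t : ℕ}

theorem IsAugPath.mem_Icc_of_matchedAt (hP : IsAugPath E.M Mopt m p) (ht : t ≤ 2 * m + 1)
    (hj : matchedAt E j (p t)) : 1 ≤ t ∧ t ≤ 2 * m := by
  have he : s(E.sel j, E.oth j) ∈ E.M := ⟨j, hj.1, rfl⟩
  have hte : p t ∈ s(E.sel j, E.oth j) := Sym2.mem_iff.2 hj.2
  constructor
  · by_contra h
    exact (hP.2.2 _ he).1 (by rwa [show t = 0 by omega] at hte)
  · by_contra h
    exact (hP.2.2 _ he).2 (by rwa [show t = 2 * m + 1 by omega] at hte)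

theorem FEdge.eq_of_isAugPath [Finite V] {M : Set (Sym2 V)} (hdeg : maxDegLE G 3)
    (hM : M ⊆ G.edgeSet) (hOpt : Mopt ⊆ G.edgeSet) (hP : IsAugPath M Mopt m p)
    (h1 : 1 ≤ t) (h2 : t ≤ 2 * m) {w₁ w₂ : V} (hw₁ : FEdge G M Mopt (p t) w₁)
    (hw₂ : FEdge G M Mopt (p t) w₂) : w₁ = w₂ := by
  have hm := hP.mem_M_s8 h1 h2
  have ho := hP.mem_opt (t := t) (by omega)
  have hmo : p (mNbr t) ≠ p (optNbr t) := fun h => mNbr_ne_optNbr t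
    ((hP.inj (by have := (mNbr_mem_Icc h1 h2).2; omega) (optNbr_le (by omega))).1 h)
  rcases eq_or_eq_or_eq_of_ncard_le_three (hdeg (p t)) (G.mem_edgeSet.1 (hM hm))
      (G.mem_edgeSet.1 (hOpt ho)) (G.mem_edgeSet.1 hw₁.1) hmo (fun h => hw₁.2.1 (h ▸ hm))
      (fun h => hw₁.2.2 (h ▸ ho)) (G.mem_edgeSet.1 hw₂.1) with h | h | h
  · exact absurd (h ▸ hm) hw₂.2.1
  · exact absurd (h ▸ ho) hw₂.2.2
  · exact h.symm

theorem not_matchedAt_of_creationStep (hP : IsAugPath E.M Mopt m p)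
    (hc : creationStep E (pathSupp m p) i) (ht : t ≤ 2 * m + 1) (hj : j < i) :
    ¬matchedAt E j (p t) := by
  intro hm
  obtain ⟨h1, h2⟩ := hP.mem_Icc_of_matchedAt ht hm
  have hsupp : ∀ x ∈ s(E.sel j, E.oth j), x ∈ pathSupp m p := by
    rw [← E.eq_of_mem_M hm (hP.mem_M_s8 h1 h2) (Sym2.mem_mk_left _ _)]
    intro x hx
    rcases Sym2.mem_iff.1 hx with rfl | rfl
    exacts [⟨t, ht, rfl⟩,
      ⟨mNbr t, show mNbr t ≤ 2 * m + 1 by have := mNbr_mem_Icc h1 h2; omega, rfl⟩]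
  exact hc.2.2.2 j hj ⟨hsupp _ (Sym2.mem_mk_left _ _), hsupp _ (Sym2.mem_mk_right _ _)⟩

end AugPath

section PathDebits

variable {V : Type} [Finite V] {G : SimpleGraph V} {E : GreedyExec V G} {Mopt : Set (Sym2 V)}
  {m : ℕ} {p : ℕ → V} {i : ℕ}

theorem debits_path_le_of_transferTargets_eq_empty (hdeg : maxDegLE G 3)
    (hOpt : Mopt ⊆ G.edgeSet) (hP : IsAugPath E.M Mopt m p) {t₁ t₂ : ℕ} (hne : t₁ ≠ t₂)
    (ht₁ : 1 ≤ t₁ ∧ t₁ ≤ 2 * m) (ht₂ : 1 ≤ t₂ ∧ t₂ ≤ 2 * m)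
    (hfree₁ : transferTargets E E.M Mopt (p t₁) = ∅)
    (hfree₂ : transferTargets E E.M Mopt (p t₂) = ∅) :
    debits E E.M Mopt (pathSupp m p) ≤ 2 * m - 2 := by
  set T := {q : V × V | IsTransfer E E.M Mopt q.1 q.2 ∧ q.1 ∈ pathSupp m p}
  have hsrc : ∀ q ∈ T, ∃ t ∈ Set.Icc 1 (2 * m) \ {t₁, t₂}, p t = q.1 := by
    rintro ⟨x, w⟩ ⟨⟨j, hj⟩, t, ht, rfl⟩
    refine ⟨t, ⟨hP.mem_Icc_of_matchedAt ht hj.2.2.1, ?_⟩, rfl⟩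
    rintro (rfl | rfl)
    exacts [Set.eq_empty_iff_forall_notMem.1 hfree₁ w ⟨j, hj⟩,
      Set.eq_empty_iff_forall_notMem.1 hfree₂ w ⟨j, hj⟩]
  have hinj : Set.InjOn Prod.fst T := by
    rintro ⟨x, w⟩ hq ⟨x', w'⟩ hq' (rfl : x = x')
    obtain ⟨t, ⟨⟨h1, h2⟩, -⟩, rfl⟩ := hsrc _ hq
    obtain ⟨⟨j, hj⟩, -⟩ := hq
    obtain ⟨⟨j', hj'⟩, -⟩ := hq'
    exact Prod.ext rfl (FEdge.eq_of_isAugPath hdeg E.M_subset_edgeSet hOpt hP h1 h2 hj.1 hj'.1)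
  have hsub : ({t₁, t₂} : Set ℕ) ⊆ Set.Icc 1 (2 * m) := by
    rintro _ (rfl | rfl)
    exacts [ht₁, ht₂]
  calc debits E E.M Mopt (pathSupp m p) = (Prod.fst '' T).ncard := hinj.ncard_image.symm
    _ ≤ (p '' (Set.Icc 1 (2 * m) \ {t₁, t₂})).ncard := Set.ncard_le_ncard (by
        rintro _ ⟨q, hq, rfl⟩
        exact hsrc q hq)
    _ ≤ (Set.Icc 1 (2 * m) \ {t₁, t₂}).ncard := Set.ncard_image_le (Set.toFinite _)
    _ = 2 * m - 2 := by
        rw [Set.ncard_sdiff hsub (Set.toFinite _), Set.ncard_pair hne]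
        simp

theorem transferTargets_optNbr_eq_empty (hdeg : maxDegLE G 3) (h12 : E.Is12MinGreedy)
    (hOM : IsMatchingSet G Mopt) (hP : IsAugPath E.M Mopt m p)
    (hcub : E.IsCubicAt i) {a : ℕ} (h1 : 1 ≤ a) (h2 : a ≤ 2 * m)
    (hpa : matchedAt E i (p a)) (hz : (E.Gs i).Adj (p a) (p (optNbr a)))
    (hw : (transferTargets E E.M Mopt (p a)).Nonempty) :
    E.sel (i + 1) = p (optNbr a) ∧ (1 ≤ optNbr a ∧ optNbr a ≤ 2 * m) ∧
      transferTargets E E.M Mopt (p (optNbr a)) = ∅ := by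
  obtain ⟨w, hw⟩ := hw
  have hw := hw.transferAt hpa
  have hb := mNbr_mem_Icc h1 h2
  have hma := hP.mem_M_s8 h1 h2
  have hoa := hP.mem_opt (t := a) (by omega)
  have hob := hP.mem_opt (t := mNbr a) (by omega)
  have hoa_le : optNbr a ≤ 2 * m + 1 := optNbr_le (by omega)
  have hpb : matchedAt E i (p (mNbr a)) := (E.matchedAt_iff_of_mem_M hpa hma).2 (Or.inr rfl)
  have hzi : ¬matchedAt E i (p (optNbr a)) := fun h => by
    rcases (E.matchedAt_iff_of_mem_M hpa hma).1 h with h | h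
    · exact optNbr_ne a ((hP.inj hoa_le (by omega)).1 h)
    · exact mNbr_ne_optNbr a ((hP.inj hoa_le (by omega)).1 h).symm
  obtain ⟨hk, hsel, hzadj⟩ :=
    sel_succ_eq_of_transferAt hdeg h12 hcub hw hz hzi fun h => hw.1.2.2 (h ▸ hoa)
  have hz_int := hP.mem_Icc_of_matchedAt hoa_le ⟨hk, Or.inl hsel.symm⟩
  have hF : FEdge G E.M Mopt (p (optNbr a)) (p (mNbr a)) := by
    refine ⟨G.mem_edgeSet.2 (E.Gs_le hpa.1.le (hzadj _ hpb)), fun h => ?_, fun h => ?_⟩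
    · rw [Sym2.eq_swap] at h
      exact hzi ((E.matchedAt_iff_of_mem_M hpb h).2 (Or.inr rfl))
    · rw [Sym2.eq_swap] at h
      have := Sym2.congr_right.1 (hOM.eq_of_mem hob h (Sym2.mem_mk_left _ _)
        (Sym2.mem_mk_left _ _))
      exact optNbr_mNbr_ne h1 ((hP.inj (optNbr_le (by omega)) hoa_le).1 this)
  refine ⟨hsel, hz_int, Set.eq_empty_of_forall_notMem fun w' ⟨j, hj⟩ => ?_⟩
  have := FEdge.eq_of_isAugPath hdeg E.M_subset_edgeSet hOM.1 hP hz_int.1 hz_int.2 hj.1 hF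
  exact hj.not_matchedAt i (this ▸ hpb)

theorem debits_path_le (hdeg : maxDegLE G 3) (h12 : E.Is12MinGreedy)
    (hOM : IsMatchingSet G Mopt) (hP : IsAugPath E.M Mopt m p)
    (hc : creationStep E (pathSupp m p) i)
    (hd : deg (E.Gs i) (E.sel i) = 1 ∨ deg (E.Gs i) (E.sel i) = 3) :
    debits E E.M Mopt (pathSupp m p) ≤ 2 * m - 2 := by
  obtain ⟨hi, ⟨a, ha, hpa⟩, -⟩ := id hc
  have hua : matchedAt E i (p a) := ⟨hi, Or.inl hpa⟩
  obtain ⟨h1, h2⟩ := hP.mem_Icc_of_matchedAt ha hua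
  have hma := hP.mem_M_s8 h1 h2
  obtain ⟨hb1, hb2⟩ := mNbr_mem_Icc h1 h2
  have hpb : p (mNbr a) = E.oth i := E.eq_oth_of_mem_M hi (by rwa [← hpa])
  have hpres : ∀ t ≤ 2 * m + 1, (E.Gs i).Adj (p t) (p (optNbr t)) := fun t ht =>
    E.adj_of_not_matchedAt hi.le (G.mem_edgeSet.1 (hOM.1 (hP.mem_opt ht)))
      (fun _ hj => not_matchedAt_of_creationStep hP hc ht hj)
      (fun _ hj => not_matchedAt_of_creationStep hP hc (optNbr_le ht) hj)
  have h3 : deg (E.Gs i) (E.sel i) = 3 := by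
    have := two_le_deg_of_adj (hpa ▸ hpb ▸ E.adj i hi) (hpres a ha)
      fun h => mNbr_ne_optNbr a ((hP.inj (by omega) (optNbr_le ha)).1 h)
    rw [hpa] at this
    omega
  have hnext := fun {c : ℕ} (hc1 : 1 ≤ c) (hc2 : c ≤ 2 * m) (hpc : matchedAt E i (p c)) =>
    transferTargets_optNbr_eq_empty hdeg h12 hOM hP
      (E.isCubicAt_of_deg_sel_eq_three hdeg h12 hi h3) hc1 hc2 hpc (hpres c (by omega))
  have hvb : matchedAt E i (p (mNbr a)) := ⟨hi, Or.inr hpb⟩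
  rcases (transferTargets E E.M Mopt (p a)).eq_empty_or_nonempty with hA | hA <;>
    rcases (transferTargets E E.M Mopt (p (mNbr a))).eq_empty_or_nonempty with hB | hB
  · exact debits_path_le_of_transferTargets_eq_empty hdeg hOM.1 hP (mNbr_ne h1).symm
      ⟨h1, h2⟩ ⟨hb1, hb2⟩ hA hB
  · obtain ⟨-, hbnd, hfree⟩ := hnext hb1 hb2 hvb hB
    exact debits_path_le_of_transferTargets_eq_empty hdeg hOM.1 hP
      (fun h => mNbr_ne_optNbr (mNbr a) ((mNbr_mNbr h1).trans h)) ⟨h1, h2⟩ hbnd hA hfree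
  · obtain ⟨-, hbnd, hfree⟩ := hnext h1 h2 hua hA
    exact debits_path_le_of_transferTargets_eq_empty hdeg hOM.1 hP (mNbr_ne_optNbr a)
      ⟨hb1, hb2⟩ hbnd hB hfree
  · -- both transfers would force `sel (i + 1)` to be two different vertices
    obtain ⟨hsa, hbnda, -⟩ := hnext h1 h2 hua hA
    obtain ⟨hsb, hbndb, -⟩ := hnext hb1 hb2 hvb hB
    exact absurd ((hP.inj (by omega) (by omega)).1 (hsa.symm.trans hsb)).symm
      (optNbr_mNbr_ne h1)

end PathDebits

/-- two debits are missing, i.e. d_X ≤ D_X − 2, (a) if the selected vertex of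
the creation step has degree 1, (b) if it has degree 3, and (c) if X is a singleton. -/
theorem two_missing_debits {V : Type} [Fintype V] (G : SimpleGraph V)
    (hdeg : maxDegLE G 3)
    (E : GreedyExec V G) (h12 : E.Is12MinGreedy)
    (Mopt : Set (Sym2 V)) (hnf : NormalForm G E.M Mopt) :
    (∀ x y : V, s(x, y) ∈ E.M → s(x, y) ∈ Mopt →
      debits E E.M Mopt ({x, y} : Set V) ≤ 4 - 2) ∧
    (∀ (m : ℕ) (p : ℕ → V), IsAugPath E.M Mopt m p →
      ∀ i : ℕ, creationStep E (pathSupp m p) i →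
        (deg (E.Gs i) (E.sel i) = 1 ∨ deg (E.Gs i) (E.sel i) = 3) →
        debits E E.M Mopt (pathSupp m p) ≤ 2 * m - 2) :=
  ⟨fun _ _ hM _ => debits_singleton_le hdeg h12 hM,
    fun _ _ hP _ hc hd => debits_path_le hdeg h12 hnf.1.1 hP hc hd⟩

end

end MinGreedy
end

section
/- Let G be a finite simple graph, let M be the output matching of a 1-2-MinGreedy execution on G, and let M* be a maximum matching of G in normal form with respect to M. Then: (a) every endpoint w of an M-augmenting path of (V, M ∪ M*) is the target of at most three transfers; (b) an endpoint w is the target of exactly three transfers if and only if there is a step of the execution in which the degree of w drops from 3 to 1 by the removal of two F-edges incident with w, and a later step in which the degree of w drops from 1 to 0 by the removal of an F-edge incident with w. -/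
namespace MinGreedy

noncomputable section

open SimpleGraph

section Aux

variable {V : Type} {G : SimpleGraph V} (E : GreedyExec V G)

lemma adj_succ {i : ℕ} (hi : i < E.k) {x y : V} :
    (E.Gs (i + 1)).Adj x y ↔ (E.Gs i).Adj x y ∧
      x ≠ E.sel i ∧ x ≠ E.oth i ∧ y ≠ E.sel i ∧ y ≠ E.oth i := by
  rw [E.step i hi]
  simp only [fromEdgeSet_adj, Set.mem_setOf_eq, mem_edgeSet, Sym2.mem_iff]
  constructor
  · rintro ⟨⟨h, hs, ho⟩, _⟩
    push_neg at hs ho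
    exact ⟨h, (hs.1).symm, (ho.1).symm, (hs.2).symm, (ho.2).symm⟩
  · rintro ⟨h, h1, h2, h3, h4⟩
    refine ⟨⟨h, ?_, ?_⟩, h.ne⟩
    · push_neg; exact ⟨h1.symm, h3.symm⟩
    · push_neg; exact ⟨h2.symm, h4.symm⟩

lemma mono {a b : ℕ} (hab : a ≤ b) (hb : b ≤ E.k) {x y : V}
    (h : (E.Gs b).Adj x y) : (E.Gs a).Adj x y := by
  induction b with
  | zero => obtain rfl := Nat.le_zero.mp hab; exact h
  | succ n ih =>
    have hn : n < E.k := Nat.lt_of_succ_le hb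
    have hn' : (E.Gs n).Adj x y := ((adj_succ E hn).mp h).1
    rcases Nat.lt_or_ge a (n + 1) with h' | h'
    · exact ih (Nat.lt_succ_iff.mp h') hn.le hn'
    · obtain rfl := le_antisymm hab h'; exact h

lemma isolated {i b : ℕ} {v y : V} (h : matchedAt E i v) (hib : i < b) (hb : b ≤ E.k) :
    ¬ (E.Gs b).Adj v y := by
  intro hadj
  have h1 : (E.Gs (i + 1)).Adj v y := mono E hib hb hadj
  rw [adj_succ E h.1] at h1
  rcases h.2 with rfl | rfl
  · exact h1.2.1 rfl
  · exact h1.2.2.1 rfl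

lemma matched_unique {i j : ℕ} {v : V} (hi : matchedAt E i v) (hj : matchedAt E j v) :
    i = j := by
  by_contra hne
  have key : ∀ a b : ℕ, matchedAt E a v → matchedAt E b v → a < b → False := by
    intro a b ha hb hab
    have hadjb := E.adj b hb.1
    rcases hb.2 with h | h
    · exact isolated E ha hab hb.1.le (h ▸ hadjb)
    · exact isolated E ha hab hb.1.le (h ▸ hadjb.symm)
  rcases Nat.lt_or_ge i j with h | h
  · exact key i j hi hj h
  · exact key j i hj hi (lt_of_le_of_ne h (fun hh => hne hh.symm))

lemma endpoint_not_matched {Mopt : Set (Sym2 V)} {w : V}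
    (hw : IsPathEndpoint E.M Mopt w) {i : ℕ} : ¬ matchedAt E i w := by
  rintro ⟨hik, hw'⟩
  obtain ⟨m, p, ⟨_, _, hfree⟩, hwp⟩ := hw
  have hmem : s(E.sel i, E.oth i) ∈ E.M := ⟨i, hik, rfl⟩
  have hfr := hfree _ hmem
  have hwin : w ∈ s(E.sel i, E.oth i) := by
    rcases hw' with rfl | rfl
    · exact Sym2.mem_mk_left _ _
    · exact Sym2.mem_mk_right _ _
  rcases hwp with rfl | rfl
  · exact hfr.1 hwin
  · exact hfr.2 hwin

lemma persist {Mopt : Set (Sym2 V)} {w v : V} (hw : IsPathEndpoint E.M Mopt w)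
    {i : ℕ} (hv : matchedAt E i v) (hadj : G.Adj v w) {b : ℕ} (hb : b ≤ i) :
    (E.Gs b).Adj v w := by
  induction b with
  | zero => rw [E.init]; exact hadj
  | succ n ih =>
    have hik := hv.1
    have hn : n < E.k := by omega
    rw [adj_succ E hn]
    refine ⟨ih (by omega), ?_, ?_, ?_, ?_⟩
    · intro h; have := matched_unique E hv ⟨hn, Or.inl h⟩; omega
    · intro h; have := matched_unique E hv ⟨hn, Or.inr h⟩; omega
    · intro h; exact endpoint_not_matched E hw ⟨hn, Or.inl h⟩
    · intro h; exact endpoint_not_matched E hw ⟨hn, Or.inr h⟩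

lemma FEdge_symm {M Mopt : Set (Sym2 V)} {x y : V} (h : FEdge G M Mopt x y) :
    FEdge G M Mopt y x := by
  unfold FEdge at *; rwa [Sym2.eq_swap]

end Aux

/-- (a) every endpoint is the target of at most three transfers;
(b) it is the target of exactly three transfers iff its degree drops from 3 to 1 by the
removal of two incident F-edges and later from 1 to 0 by the removal of an F-edge. -/
theorem three_transfers_iff {V : Type} [Fintype V] (G : SimpleGraph V)
    (E : GreedyExec V G) (h12 : E.Is12MinGreedy)
    (Mopt : Set (Sym2 V)) (hnf : NormalForm G E.M Mopt) :
    ∀ w : V, IsPathEndpoint E.M Mopt w →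
      ({v : V | IsTransfer E E.M Mopt v w}.ncard ≤ 3) ∧
      ({v : V | IsTransfer E E.M Mopt v w}.ncard = 3 ↔
        ∃ i < E.k, ∃ j, i < j ∧ j < E.k ∧
          deg (E.Gs i) w = 3 ∧ deg (E.Gs (i + 1)) w = 1 ∧
          (∀ x : V, (E.Gs i).Adj w x → ¬(E.Gs (i + 1)).Adj w x →
            FEdge G E.M Mopt w x) ∧
          deg (E.Gs j) w = 1 ∧ deg (E.Gs (j + 1)) w = 0 ∧
          (∀ x : V, (E.Gs j).Adj w x → FEdge G E.M Mopt w x)) := by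
  intro w hw
  classical
  set S := {v : V | IsTransfer E E.M Mopt v w} with hSdef
  by_cases hne : ∃ i, ∃ v, transferAt E E.M Mopt i v w
  · -- positive case: there is at least one transfer to w
    set i0 := Nat.find hne with hi0def
    obtain ⟨v0, hv0⟩ := Nat.find_spec hne
    have hmin : ∀ j, j < i0 → ¬ ∃ v, transferAt E E.M Mopt j v w :=
      fun j hj => Nat.find_min hne hj
    have hi0k : i0 < E.k := hv0.2.2.1.1
    have hwns : w ≠ E.sel i0 := fun h => endpoint_not_matched E hw ⟨hi0k, Or.inl h⟩
    have hwno : w ≠ E.oth i0 := fun h => endpoint_not_matched E hw ⟨hi0k, Or.inr h⟩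
    have hdeg1 : ((E.Gs (i0 + 1)).neighborSet w).ncard ≤ 1 := hv0.2.2.2
    have hsub : S ⊆ ({E.sel i0, E.oth i0} : Set V) ∪ (E.Gs (i0 + 1)).neighborSet w := by
      rintro v hv
      obtain ⟨j, ht⟩ := hv
      have hj0 : i0 ≤ j := by
        by_contra hc; push_neg at hc; exact hmin j hc ⟨v, ht⟩
      rcases eq_or_lt_of_le hj0 with rfl | hlt
      · rcases ht.2.2.1.2 with h | h
        · exact Set.mem_union_left _ (by rw [h]; exact Set.mem_insert _ _)
        · exact Set.mem_union_left _ (by rw [h]; exact Set.mem_insert_of_mem _ rfl)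
      · have hGadj : G.Adj v w := (mem_edgeSet _).mp ht.1.1
        have hpers : (E.Gs (i0 + 1)).Adj v w := persist E hw ht.2.2.1 hGadj hlt
        exact Set.mem_union_right _ hpers.symm
    have hpairle : ({E.sel i0, E.oth i0} : Set V).ncard ≤ 2 := by
      refine le_trans (Set.ncard_insert_le _ _) ?_
      rw [Set.ncard_singleton]
    have hTle : (({E.sel i0, E.oth i0} : Set V) ∪ (E.Gs (i0 + 1)).neighborSet w).ncard ≤ 3 :=
      le_trans (Set.ncard_union_le _ _) (by omega)
    have hle3 : S.ncard ≤ 3 := le_trans (Set.ncard_le_ncard hsub (Set.toFinite _)) hTle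
    refine ⟨hle3, ?_, ?_⟩
    · -- S.ncard = 3 → the degree-drop pattern
      intro h3
      have hST : S = ({E.sel i0, E.oth i0} : Set V) ∪ (E.Gs (i0 + 1)).neighborSet w :=
        Set.eq_of_subset_of_ncard_le hsub (by omega) (Set.toFinite _)
      have hNge : 1 ≤ ((E.Gs (i0 + 1)).neighborSet w).ncard := by
        by_contra hc
        push_neg at hc
        have hN0 : (E.Gs (i0 + 1)).neighborSet w = ∅ :=
          (Set.ncard_eq_zero (Set.toFinite _)).mp (Nat.lt_one_iff.mp hc)
        rw [hN0, Set.union_empty] at hST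
        have : S.ncard ≤ 2 := hST ▸ hpairle
        omega
      have hN1 : ((E.Gs (i0 + 1)).neighborSet w).ncard = 1 := le_antisymm hdeg1 hNge
      obtain ⟨x, hx⟩ := Set.ncard_eq_one.mp hN1
      have hxmem : x ∈ (E.Gs (i0 + 1)).neighborSet w := by rw [hx]; exact rfl
      have hxadj1 : (E.Gs (i0 + 1)).Adj w x := hxmem
      have hxs : x ≠ E.sel i0 ∧ x ≠ E.oth i0 := by
        have h := (adj_succ E hi0k).mp hxadj1
        exact ⟨h.2.2.2.1, h.2.2.2.2⟩
      have hso : E.sel i0 ≠ E.oth i0 := (E.adj i0 hi0k).ne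
      have hxS : x ∈ S := by rw [hST]; exact Set.mem_union_right _ hxmem
      obtain ⟨j, htj⟩ := hxS
      have hmj : matchedAt E j x := htj.2.2.1
      have hij : i0 < j := by
        rcases Nat.lt_or_ge i0 j with h | h
        · exact h
        · exact absurd hxadj1.symm
            (isolated E hmj (by omega) (by omega))
      have hjk : j < E.k := hmj.1
      have hselS : E.sel i0 ∈ S := by
        rw [hST]; exact Set.mem_union_left _ (Set.mem_insert _ _)
      have hothS : E.oth i0 ∈ S := by
        rw [hST]; exact Set.mem_union_left _ (Set.mem_insert_of_mem _ rfl)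
      obtain ⟨js, hts⟩ := hselS
      obtain ⟨jo, hto⟩ := hothS
      have hselGs : (E.Gs i0).Adj (E.sel i0) w :=
        persist E hw ⟨hi0k, Or.inl rfl⟩ ((mem_edgeSet _).mp hts.1.1) (le_refl i0)
      have hothGs : (E.Gs i0).Adj (E.oth i0) w :=
        persist E hw ⟨hi0k, Or.inr rfl⟩ ((mem_edgeSet _).mp hto.1.1) (le_refl i0)
      have hxGs : ∀ b ≤ j, (E.Gs b).Adj x w :=
        fun b hb => persist E hw hmj ((mem_edgeSet _).mp htj.1.1) hb
      have hNi0 : (E.Gs i0).neighborSet w = {x, E.sel i0, E.oth i0} := by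
        ext y
        simp only [mem_neighborSet, Set.mem_insert_iff, Set.mem_singleton_iff]
        constructor
        · intro hy
          by_cases h1 : y = E.sel i0
          · exact Or.inr (Or.inl h1)
          by_cases h2 : y = E.oth i0
          · exact Or.inr (Or.inr h2)
          left
          have hy1 : (E.Gs (i0 + 1)).Adj w y :=
            (adj_succ E hi0k).mpr ⟨hy, hwns, hwno, h1, h2⟩
          have hy2 : y ∈ (E.Gs (i0 + 1)).neighborSet w := hy1
          rw [hx] at hy2; exact hy2
        · rintro (rfl | rfl | rfl)
          · exact (hxGs i0 hij.le).symm
          · exact hselGs.symm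
          · exact hothGs.symm
      have hd3 : deg (E.Gs i0) w = 3 := by
        show ((E.Gs i0).neighborSet w).ncard = 3
        rw [hNi0, Set.ncard_insert_of_notMem (by simp [hxs.1, hxs.2]),
          Set.ncard_insert_of_notMem (by simp [hso]), Set.ncard_singleton]
      have hNj : (E.Gs j).neighborSet w = {x} := by
        ext y
        simp only [mem_neighborSet, Set.mem_singleton_iff]
        constructor
        · intro hy
          have hy1 : (E.Gs (i0 + 1)).Adj w y := mono E (by omega) hjk.le hy
          have hy2 : y ∈ (E.Gs (i0 + 1)).neighborSet w := hy1
          rw [hx] at hy2; exact hy2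
        · rintro rfl; exact (hxGs j le_rfl).symm
      refine ⟨i0, hi0k, j, hij, hjk, hd3, hN1, ?_, ?_, ?_, ?_⟩
      · intro y hy hny
        have h1 : y = E.sel i0 ∨ y = E.oth i0 := by
          by_contra hc; push_neg at hc
          exact hny ((adj_succ E hi0k).mpr ⟨hy, hwns, hwno, hc.1, hc.2⟩)
        have hjs : js = i0 := matched_unique E hts.2.2.1 ⟨hi0k, Or.inl rfl⟩
        have hjo : jo = i0 := matched_unique E hto.2.2.1 ⟨hi0k, Or.inr rfl⟩
        rcases h1 with rfl | rfl
        · exact FEdge_symm hts.1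
        · exact FEdge_symm hto.1
      · show ((E.Gs j).neighborSet w).ncard = 1
        rw [hNj, Set.ncard_singleton]
      · show ((E.Gs (j + 1)).neighborSet w).ncard = 0
        have hempty : (E.Gs (j + 1)).neighborSet w = ∅ := by
          ext y
          simp only [mem_neighborSet, Set.mem_empty_iff_false, iff_false]
          intro hy
          have hy' := (adj_succ E hjk).mp hy
          have hyx : y = x := by
            have : y ∈ (E.Gs j).neighborSet w := hy'.1
            rw [hNj] at this; exact this
          rcases hmj.2 with h | h
          · exact hy'.2.2.2.1 (hyx.trans h)
          · exact hy'.2.2.2.2 (hyx.trans h)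
        rw [hempty]; exact Set.ncard_empty _
      · intro y hy
        have hyx : y = x := by
          have : y ∈ (E.Gs j).neighborSet w := hy
          rw [hNj] at this; exact this
        rw [hyx]; exact FEdge_symm htj.1
    · -- the degree-drop pattern → S.ncard = 3
      rintro ⟨i, hik, j, hij, hjk, hd3, hd1, hFi, hdj1, hdj0, hFj⟩
      have hwnsi : w ≠ E.sel i := fun h => endpoint_not_matched E hw ⟨hik, Or.inl h⟩
      have hwnoi : w ≠ E.oth i := fun h => endpoint_not_matched E hw ⟨hik, Or.inr h⟩
      have hwnsj : w ≠ E.sel j := fun h => endpoint_not_matched E hw ⟨hjk, Or.inl h⟩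
      have hwnoj : w ≠ E.oth j := fun h => endpoint_not_matched E hw ⟨hjk, Or.inr h⟩
      obtain ⟨x, hxj⟩ := Set.ncard_eq_one.mp
        (show ((E.Gs j).neighborSet w).ncard = 1 from hdj1)
      have hxmemj : x ∈ (E.Gs j).neighborSet w := by rw [hxj]; exact rfl
      have hxadjj : (E.Gs j).Adj w x := hxmemj
      have hNj1 : (E.Gs (j + 1)).neighborSet w = ∅ :=
        (Set.ncard_eq_zero (Set.toFinite _)).mp (show ((E.Gs (j + 1)).neighborSet w).ncard = 0 from hdj0)
      have hnadjj : ¬ (E.Gs (j + 1)).Adj w x := by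
        intro hc
        have : x ∈ (E.Gs (j + 1)).neighborSet w := hc
        rw [hNj1] at this; exact this
      have hxm : x = E.sel j ∨ x = E.oth j := by
        by_contra hc; push_neg at hc
        exact hnadjj ((adj_succ E hjk).mpr ⟨hxadjj, hwnsj, hwnoj, hc.1, hc.2⟩)
      have hxS : x ∈ S :=
        ⟨j, FEdge_symm (hFj x hxadjj), hw, ⟨hjk, hxm⟩,
          le_trans (le_of_eq hdj0) (Nat.zero_le 1)⟩
      have hsubNi : (E.Gs (i + 1)).neighborSet w ⊆ (E.Gs i).neighborSet w :=
        fun y hy => mono E (Nat.le_succ i) hik hy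
      have hdiff : ((E.Gs i).neighborSet w \ (E.Gs (i + 1)).neighborSet w).ncard = 2 := by
        rw [Set.ncard_diff hsubNi]
        have e3 : ((E.Gs i).neighborSet w).ncard = 3 := hd3
        have e1 : ((E.Gs (i + 1)).neighborSet w).ncard = 1 := hd1
        omega
      have hdsub : (E.Gs i).neighborSet w \ (E.Gs (i + 1)).neighborSet w ⊆
          ({E.sel i, E.oth i} : Set V) := by
        rintro y ⟨hy1, hy2⟩
        by_contra hc
        simp only [Set.mem_insert_iff, Set.mem_singleton_iff, not_or] at hc
        exact hy2 ((adj_succ E hik).mpr ⟨hy1, hwnsi, hwnoi, hc.1, hc.2⟩)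
      have hp2 : ({E.sel i, E.oth i} : Set V).ncard ≤ 2 := by
        refine le_trans (Set.ncard_insert_le _ _) ?_
        rw [Set.ncard_singleton]
      have hdeq : (E.Gs i).neighborSet w \ (E.Gs (i + 1)).neighborSet w =
          ({E.sel i, E.oth i} : Set V) :=
        Set.eq_of_subset_of_ncard_le hdsub (by rw [hdiff]; exact hp2) (Set.toFinite _)
      have hselmem : E.sel i ∈ (E.Gs i).neighborSet w \ (E.Gs (i + 1)).neighborSet w := by
        rw [hdeq]; exact Set.mem_insert _ _
      have hothmem : E.oth i ∈ (E.Gs i).neighborSet w \ (E.Gs (i + 1)).neighborSet w := by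
        rw [hdeq]; exact Set.mem_insert_of_mem _ rfl
      have hselS : E.sel i ∈ S :=
        ⟨i, FEdge_symm (hFi _ hselmem.1 hselmem.2), hw, ⟨hik, Or.inl rfl⟩, hd1.le⟩
      have hothS : E.oth i ∈ S :=
        ⟨i, FEdge_symm (hFi _ hothmem.1 hothmem.2), hw, ⟨hik, Or.inr rfl⟩, hd1.le⟩
      have hso : E.sel i ≠ E.oth i := (E.adj i hik).ne
      have hxsel : x ≠ E.sel i := by
        intro h
        exact isolated E ⟨hik, Or.inl rfl⟩ hij hjk.le (h ▸ hxadjj.symm)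
      have hxoth : x ≠ E.oth i := by
        intro h
        exact isolated E ⟨hik, Or.inr rfl⟩ hij hjk.le (h ▸ hxadjj.symm)
      have hfin : ({x, E.sel i, E.oth i} : Set V) ⊆ S := by
        intro y hy
        simp only [Set.mem_insert_iff, Set.mem_singleton_iff] at hy
        rcases hy with rfl | rfl | rfl
        · exact hxS
        · exact hselS
        · exact hothS
      have hcard3 : ({x, E.sel i, E.oth i} : Set V).ncard = 3 := by
        rw [Set.ncard_insert_of_notMem (by simp [hxsel, hxoth]),
          Set.ncard_insert_of_notMem (by simp [hso]), Set.ncard_singleton]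
      have h3le : 3 ≤ S.ncard := by
        rw [← hcard3]
        exact Set.ncard_le_ncard hfin (Set.toFinite _)
      omega
  · -- no transfer at all
    have hS0 : S = ∅ := by
      ext v
      simp only [hSdef, Set.mem_setOf_eq, Set.mem_empty_iff_false, iff_false]
      rintro ⟨i, ht⟩
      exact hne ⟨i, v, ht⟩
    rw [hS0, Set.ncard_empty]
    refine ⟨by norm_num, ?_, ?_⟩
    · intro h; exact absurd h (by norm_num)
    · rintro ⟨i, hik, j, hij, hjk, hd3, hd1, hFi, hdj1, hdj0, hFj⟩
      exfalso
      have hwnsj : w ≠ E.sel j := fun h => endpoint_not_matched E hw ⟨hjk, Or.inl h⟩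
      have hwnoj : w ≠ E.oth j := fun h => endpoint_not_matched E hw ⟨hjk, Or.inr h⟩
      obtain ⟨x, hxj⟩ := Set.ncard_eq_one.mp
        (show ((E.Gs j).neighborSet w).ncard = 1 from hdj1)
      have hxmemj : x ∈ (E.Gs j).neighborSet w := by rw [hxj]; exact rfl
      have hxadjj : (E.Gs j).Adj w x := hxmemj
      have hNj1 : (E.Gs (j + 1)).neighborSet w = ∅ :=
        (Set.ncard_eq_zero (Set.toFinite _)).mp (show ((E.Gs (j + 1)).neighborSet w).ncard = 0 from hdj0)
      have hnadjj : ¬ (E.Gs (j + 1)).Adj w x := by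
        intro hc
        have : x ∈ (E.Gs (j + 1)).neighborSet w := hc
        rw [hNj1] at this; exact this
      have hxm : x = E.sel j ∨ x = E.oth j := by
        by_contra hc; push_neg at hc
        exact hnadjj ((adj_succ E hjk).mpr ⟨hxadjj, hwnsj, hwnoj, hc.1, hc.2⟩)
      exact hne ⟨j, x, FEdge_symm (hFj x hxadjj), hw, ⟨hjk, hxm⟩,
        le_trans (le_of_eq hdj0) (Nat.zero_le 1)⟩

end

end MinGreedy
end
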